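/- arXiv:2202.04478 — 9 statements merged into one kernel-verified Lean document; each statement's English description precedes it below -/
import Mathlib

section
/- Let the weight be w_{t,i} = γ^{i−t} (the discounted relabeling weight). Then J_surr(π) ≥ T·J_WGCSL(π; w) ≥ T·J_GCSL(π). -/
/-- The surrogate objective `J_surr(π)`:
`(1/T)·E_μ[ Σ_{t=1}^T log π(a_t|s_t,g) · Σ_{i=t}^T γ^{i−1}·1[φ(s_i)=g] ]`,
with 0-based indexing (`t : Fin T` corresponds to the 1-based time step `t+1`). -/
noncomputable def Jsurr {S A G : Type} [Fintype S] [Fintype A] [Fintype G] [DecidableEq G]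
    (T : ℕ) (φ : S → G) (γ : ℝ)
    (μ : G × ((Fin T → S) × (Fin T → A)) → ℝ)
    (π : S → G → A → ℝ) : ℝ :=
  (1 / (T : ℝ)) * ∑ x : G × ((Fin T → S) × (Fin T → A)), μ x *
    ∑ t : Fin T, Real.log (π (x.2.1 t) x.1 (x.2.2 t)) *
      ∑ i ∈ Finset.Ici t, γ ^ (i : ℕ) * (if φ (x.2.1 i) = x.1 then (1 : ℝ) else 0)

/-- The weighted GCSL objective `J_WGCSL(π; w)`: the `μ`-expectation, over uniformly
sampled `t ∈ {1,…,T}` and `i ∈ {t,…,T}`, of `w_{t,i}·log π(a_t|s_t,φ(s_i))`,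
where the weight may depend on the trajectory. -/
noncomputable def Jwgcsl {S A G : Type} [Fintype S] [Fintype A] [Fintype G]
    (T : ℕ) (φ : S → G)
    (μ : G × ((Fin T → S) × (Fin T → A)) → ℝ)
    (w : ((Fin T → S) × (Fin T → A)) → Fin T → Fin T → ℝ)
    (π : S → G → A → ℝ) : ℝ :=
  ∑ x : G × ((Fin T → S) × (Fin T → A)), μ x *
    ((1 / (T : ℝ)) * ∑ t : Fin T, (1 / ((T : ℝ) - (t : ℕ))) *
      ∑ i ∈ Finset.Ici t, w x.2 t i * Real.log (π (x.2.1 t) (φ (x.2.1 i)) (x.2.2 t)))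

/-- with the discounted relabeling weight `w_{t,i} = γ^{i−t}`,
`J_surr(π) ≥ T·J_WGCSL(π; w) ≥ T·J_GCSL(π)` (where `J_GCSL = J_WGCSL` with `w ≡ 1`). -/
theorem stmt0 {S A G : Type} [Fintype S] [Fintype A] [Fintype G] [DecidableEq G]
    (T : ℕ) (hT : 1 ≤ T) (φ : S → G)
    (γ : ℝ) (hγ0 : 0 < γ) (hγ1 : γ ≤ 1)
    (π : S → G → A → ℝ)
    (hπ0 : ∀ s g a, 0 < π s g a) (hπ1 : ∀ s g a, π s g a ≤ 1)
    (μ : G × ((Fin T → S) × (Fin T → A)) → ℝ)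
    (hμ0 : ∀ x, 0 ≤ μ x) (hμ1 : ∑ x, μ x = 1) :
    Jsurr T φ γ μ π ≥
        (T : ℝ) * Jwgcsl T φ μ (fun _ t i => γ ^ ((i : ℕ) - (t : ℕ))) π ∧
    (T : ℝ) * Jwgcsl T φ μ (fun _ t i => γ ^ ((i : ℕ) - (t : ℕ))) π ≥
        (T : ℝ) * Jwgcsl T φ μ (fun _ _ _ => (1 : ℝ)) π := by

  have hT0 : (0:ℝ) < (T:ℝ) := by exact_mod_cast hT
  have hlog : ∀ s g a, Real.log (π s g a) ≤ 0 := fun s g a =>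
    Real.log_nonpos (hπ0 s g a).le (hπ1 s g a)
  have hTt : ∀ t : Fin T, (0:ℝ) < (T:ℝ) - (t:ℕ) := by
    intro t
    have : ((t:ℕ):ℝ) < (T:ℝ) := by exact_mod_cast t.isLt
    linarith
  constructor
  · -- J_surr ≥ T * J_WGCSL(w)
    rw [Jsurr, Jwgcsl, Finset.mul_sum, Finset.mul_sum]
    apply Finset.sum_le_sum
    intro x _
    have key : ∀ t : Fin T,
        (1 / ((T : ℝ) - (t : ℕ))) *
          ∑ i ∈ Finset.Ici t, γ ^ ((i:ℕ) - (t:ℕ)) *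
            Real.log (π (x.2.1 t) (φ (x.2.1 i)) (x.2.2 t))
        ≤ (1 / (T : ℝ)) * (Real.log (π (x.2.1 t) x.1 (x.2.2 t)) *
            ∑ i ∈ Finset.Ici t, γ ^ (i : ℕ) *
              (if φ (x.2.1 i) = x.1 then (1 : ℝ) else 0)) := by
      intro t
      rw [Finset.mul_sum, Finset.mul_sum, Finset.mul_sum]
      apply Finset.sum_le_sum
      intro i hi
      by_cases h : φ (x.2.1 i) = x.1
      · rw [if_pos h, ← h]
        have hc : γ ^ (i:ℕ) * (1 / (T:ℝ)) ≤ γ ^ ((i:ℕ) - (t:ℕ)) * (1 / ((T:ℝ) - (t:ℕ))) := by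
          apply mul_le_mul
          · exact pow_le_pow_of_le_one hγ0.le hγ1 (Nat.sub_le _ _)
          · apply one_div_le_one_div_of_le (hTt t)
            have : (0:ℝ) ≤ ((t:ℕ):ℝ) := by positivity
            linarith
          · positivity
          · positivity
        have hl := hlog (x.2.1 t) (φ (x.2.1 i)) (x.2.2 t)
        nlinarith [mul_le_mul_of_nonpos_right hc hl]
      · rw [if_neg h]
        have h1 : Real.log (π (x.2.1 t) (φ (x.2.1 i)) (x.2.2 t)) ≤ 0 := hlog _ _ _
        have h2 : (0:ℝ) ≤ 1 / ((T:ℝ) - (t:ℕ)) := le_of_lt (one_div_pos.mpr (hTt t))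
        have h3 : (0:ℝ) ≤ γ ^ ((i:ℕ) - (t:ℕ)) := by positivity
        have h4 : γ ^ ((i:ℕ) - (t:ℕ)) * Real.log (π (x.2.1 t) (φ (x.2.1 i)) (x.2.2 t)) ≤ 0 :=
          mul_nonpos_of_nonneg_of_nonpos h3 h1
        have h5 := mul_nonpos_of_nonneg_of_nonpos h2 h4
        simp only [mul_zero]
        exact h5
    have hmain : (∑ t : Fin T, (1 / ((T : ℝ) - (t : ℕ))) *
          ∑ i ∈ Finset.Ici t, γ ^ ((i:ℕ) - (t:ℕ)) *
            Real.log (π (x.2.1 t) (φ (x.2.1 i)) (x.2.2 t)))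
        ≤ (1 / (T : ℝ)) * ∑ t : Fin T, Real.log (π (x.2.1 t) x.1 (x.2.2 t)) *
            ∑ i ∈ Finset.Ici t, γ ^ (i : ℕ) *
              (if φ (x.2.1 i) = x.1 then (1 : ℝ) else 0) := by
      rw [Finset.mul_sum]
      exact Finset.sum_le_sum fun t _ => key t
    have hTne : (T:ℝ) ≠ 0 := ne_of_gt hT0
    have hμx := hμ0 x
    have := mul_le_mul_of_nonneg_left hmain hμx
    calc (T:ℝ) * (μ x * ((1 / (T : ℝ)) * ∑ t : Fin T, (1 / ((T : ℝ) - (t : ℕ))) *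
          ∑ i ∈ Finset.Ici t, γ ^ ((i:ℕ) - (t:ℕ)) *
            Real.log (π (x.2.1 t) (φ (x.2.1 i)) (x.2.2 t))))
        = μ x * ∑ t : Fin T, (1 / ((T : ℝ) - (t : ℕ))) *
          ∑ i ∈ Finset.Ici t, γ ^ ((i:ℕ) - (t:ℕ)) *
            Real.log (π (x.2.1 t) (φ (x.2.1 i)) (x.2.2 t)) := by
          field_simp
      _ ≤ μ x * ((1 / (T : ℝ)) * ∑ t : Fin T, Real.log (π (x.2.1 t) x.1 (x.2.2 t)) *
            ∑ i ∈ Finset.Ici t, γ ^ (i : ℕ) *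
              (if φ (x.2.1 i) = x.1 then (1 : ℝ) else 0)) := this
      _ = (1 / (T : ℝ)) * (μ x * ∑ t : Fin T, Real.log (π (x.2.1 t) x.1 (x.2.2 t)) *
            ∑ i ∈ Finset.Ici t, γ ^ (i : ℕ) *
              (if φ (x.2.1 i) = x.1 then (1 : ℝ) else 0)) := by ring
  · -- T * J_WGCSL(w) ≥ T * J_GCSL
    apply mul_le_mul_of_nonneg_left _ hT0.le
    rw [Jwgcsl, Jwgcsl]
    apply Finset.sum_le_sum
    intro x _
    apply mul_le_mul_of_nonneg_left _ (hμ0 x)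
    apply mul_le_mul_of_nonneg_left _ (by positivity : (0:ℝ) ≤ 1 / (T:ℝ))
    apply Finset.sum_le_sum
    intro t _
    apply mul_le_mul_of_nonneg_left _ (le_of_lt (one_div_pos.mpr (hTt t)))
    apply Finset.sum_le_sum
    intro i _
    have hp : γ ^ ((i:ℕ) - (t:ℕ)) ≤ 1 := pow_le_one₀ hγ0.le hγ1
    exact mul_le_mul_of_nonpos_right hp (hlog _ _ _)
end

section
/- Let h : S × A × G → ℝ satisfy h(s,a,g) ≥ 1 for all (s,a,g), and let the weight be w_{t,i} = γ^{i−t}·h(s_t, a_t, φ(s_i)). Then J_surr(π) ≥ T·J_WGCSL(π; w). -/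
/-- for `h : S × A × G → ℝ` with `h ≥ 1` and weight
`w_{t,i} = γ^{i−t}·h(s_t, a_t, φ(s_i))`, one has `J_surr(π) ≥ T·J_WGCSL(π; w)`. -/
theorem stmt2 {S A G : Type} [Fintype S] [Fintype A] [Fintype G] [DecidableEq G]
    (T : ℕ) (hT : 1 ≤ T) (φ : S → G)
    (γ : ℝ) (hγ0 : 0 < γ) (hγ1 : γ ≤ 1)
    (π : S → G → A → ℝ)
    (hπ0 : ∀ s g a, 0 < π s g a) (hπ1 : ∀ s g a, π s g a ≤ 1)
    (μ : G × ((Fin T → S) × (Fin T → A)) → ℝ)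
    (hμ0 : ∀ x, 0 ≤ μ x) (hμ1 : ∑ x, μ x = 1)
    (h : S → A → G → ℝ) (hh : ∀ s a g, 1 ≤ h s a g) :
    Jsurr T φ γ μ π ≥
      (T : ℝ) * Jwgcsl T φ μ
        (fun τ t i => γ ^ ((i : ℕ) - (t : ℕ)) * h (τ.1 t) (τ.2 t) (φ (τ.1 i))) π := by
  have hTR : (1:ℝ) ≤ (T:ℝ) := by exact_mod_cast hT
  have hT0 : (0:ℝ) < (T:ℝ) := by linarith
  rw [ge_iff_le]
  unfold Jsurr Jwgcsl
  rw [Finset.mul_sum, Finset.mul_sum]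
  apply Finset.sum_le_sum
  intro x _
  set g : G := x.1
  set s : Fin T → S := x.2.1
  set a : Fin T → A := x.2.2
  have key : ∑ t : Fin T, (1 / ((T : ℝ) - (t : ℕ))) *
      ∑ i ∈ Finset.Ici t,
        (γ ^ ((i : ℕ) - (t : ℕ)) * h (s t) (a t) (φ (s i))) *
          Real.log (π (s t) (φ (s i)) (a t)) ≤
      (1 / (T:ℝ)) * ∑ t : Fin T, Real.log (π (s t) g (a t)) *
        ∑ i ∈ Finset.Ici t, γ ^ (i : ℕ) * (if φ (s i) = g then (1:ℝ) else 0) := by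
    rw [Finset.mul_sum]
    apply Finset.sum_le_sum
    intro t _
    have htT : ((t:ℕ):ℝ) + 1 ≤ (T:ℝ) := by exact_mod_cast t.isLt
    have htpos : (0:ℝ) < (T:ℝ) - (t:ℕ) := by linarith
    have h1T : (1:ℝ) / T ≤ 1 / ((T:ℝ) - (t:ℕ)) := by
      apply one_div_le_one_div_of_le htpos
      have : (0:ℝ) ≤ ((t:ℕ):ℝ) := Nat.cast_nonneg _
      linarith
    rw [Finset.mul_sum, mul_comm (Real.log (π (s t) g (a t))), Finset.sum_mul,
      Finset.mul_sum]
    apply Finset.sum_le_sum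
    intro i _
    have hL1 : Real.log (π (s t) (φ (s i)) (a t)) ≤ 0 :=
      Real.log_nonpos (hπ0 _ _ _).le (hπ1 _ _ _)
    have hγit : (0:ℝ) ≤ γ ^ ((i:ℕ) - (t:ℕ)) := pow_nonneg hγ0.le _
    have hhge := hh (s t) (a t) (φ (s i))
    by_cases hcase : φ (s i) = g
    · rw [if_pos hcase, hcase]
      have hL2 : Real.log (π (s t) g (a t)) ≤ 0 :=
        Real.log_nonpos (hπ0 _ _ _).le (hπ1 _ _ _)
      have hγi : γ ^ (i:ℕ) ≤ γ ^ ((i:ℕ) - (t:ℕ)) :=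
        pow_le_pow_of_le_one hγ0.le hγ1 (Nat.sub_le _ _)
      have hcoef : (1:ℝ)/T * γ ^ (i:ℕ) ≤
          (1 / ((T:ℝ) - (t:ℕ))) * (γ ^ ((i:ℕ) - (t:ℕ)) * h (s t) (a t) g) := by
        calc (1:ℝ)/T * γ ^ (i:ℕ) ≤ (1 / ((T:ℝ) - (t:ℕ))) * γ ^ ((i:ℕ) - (t:ℕ)) :=
              mul_le_mul h1T hγi (pow_nonneg hγ0.le _) (by positivity)
          _ ≤ _ := mul_le_mul_of_nonneg_left
              (le_mul_of_one_le_right hγit (hh (s t) (a t) g)) (by positivity)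
      calc (1 / ((T:ℝ) - (t:ℕ))) * ((γ ^ ((i:ℕ) - (t:ℕ)) * h (s t) (a t) g) *
              Real.log (π (s t) g (a t)))
          = ((1 / ((T:ℝ) - (t:ℕ))) * (γ ^ ((i:ℕ) - (t:ℕ)) * h (s t) (a t) g)) *
              Real.log (π (s t) g (a t)) := by ring
        _ ≤ ((1:ℝ)/T * γ ^ (i:ℕ)) * Real.log (π (s t) g (a t)) :=
              mul_le_mul_of_nonpos_right hcoef hL2
        _ = (1:ℝ)/T * (γ ^ (i:ℕ) * 1 * Real.log (π (s t) g (a t))) := by ring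
    · rw [if_neg hcase]
      have : γ ^ (i:ℕ) * 0 * Real.log (π (s t) g (a t)) = 0 := by ring
      rw [this, mul_zero]
      exact mul_nonpos_of_nonneg_of_nonpos (by positivity)
        (mul_nonpos_of_nonneg_of_nonpos
          (mul_nonneg hγit (zero_le_one.trans hhge)) hL1)
  calc (T:ℝ) * (μ x * ((1 / (T:ℝ)) * ∑ t : Fin T, (1 / ((T : ℝ) - (t : ℕ))) *
          ∑ i ∈ Finset.Ici t,
            (γ ^ ((i : ℕ) - (t : ℕ)) * h (s t) (a t) (φ (s i))) *
              Real.log (π (s t) (φ (s i)) (a t))))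
      = μ x * ∑ t : Fin T, (1 / ((T : ℝ) - (t : ℕ))) *
          ∑ i ∈ Finset.Ici t,
            (γ ^ ((i : ℕ) - (t : ℕ)) * h (s t) (a t) (φ (s i))) *
              Real.log (π (s t) (φ (s i)) (a t)) := by
        field_simp
    _ ≤ μ x * ((1 / (T:ℝ)) * ∑ t : Fin T, Real.log (π (s t) g (a t)) *
          ∑ i ∈ Finset.Ici t, γ ^ (i : ℕ) * (if φ (s i) = g then (1:ℝ) else 0)) :=
        mul_le_mul_of_nonneg_left key (hμ0 x)
    _ = (1 / (T:ℝ)) * (μ x * ∑ t : Fin T, Real.log (π (s t) g (a t)) *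
          ∑ i ∈ Finset.Ici t, γ ^ (i : ℕ) * (if φ (s i) = g then (1:ℝ) else 0)) := by ring
end

section
/- For every fixed goal g ∈ G and every fixed trajectory (s, a): Σ_{t=1}^T log π(a_t|s_t,g) · Σ_{i=t}^T γ^{i−1}·1[φ(s_i)=g] ≥ Σ_{t=1}^T Σ_{i=t}^T γ^{i−t}·1[φ(s_i)=g]·log π(a_t|s_t,φ(s_i)). -/
/-- for every fixed goal `g` and fixed trajectory `(s, a)`
(0-based indexing, `t : Fin T` is the 1-based step `t+1`, so `γ^{i−1}` is `γ^(i:ℕ)`):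
`Σ_{t=1}^T log π(a_t|s_t,g) · Σ_{i=t}^T γ^{i−1}·1[φ(s_i)=g]
   ≥ Σ_{t=1}^T Σ_{i=t}^T γ^{i−t}·1[φ(s_i)=g]·log π(a_t|s_t,φ(s_i))`. -/
theorem stmt3 {S A G : Type} [DecidableEq G]
    (T : ℕ) (hT : 1 ≤ T) (φ : S → G)
    (γ : ℝ) (hγ0 : 0 < γ) (hγ1 : γ ≤ 1)
    (π : S → G → A → ℝ)
    (hπ0 : ∀ s g a, 0 < π s g a) (hπ1 : ∀ s g a, π s g a ≤ 1)
    (g : G) (s : Fin T → S) (a : Fin T → A) :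
    ∑ t : Fin T, Real.log (π (s t) g (a t)) *
        ∑ i ∈ Finset.Ici t, γ ^ (i : ℕ) * (if φ (s i) = g then (1 : ℝ) else 0) ≥
      ∑ t : Fin T, ∑ i ∈ Finset.Ici t,
        γ ^ ((i : ℕ) - (t : ℕ)) * (if φ (s i) = g then (1 : ℝ) else 0) *
          Real.log (π (s t) (φ (s i)) (a t)) := by
  apply Finset.sum_le_sum
  intro t _
  rw [Finset.mul_sum]
  apply Finset.sum_le_sum
  intro i hi
  by_cases h : φ (s i) = g
  · simp only [h, if_pos rfl, if_true, mul_one]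
    have hlog : Real.log (π (s t) g (a t)) ≤ 0 :=
      Real.log_nonpos (le_of_lt (hπ0 _ _ _)) (hπ1 _ _ _)
    have hpow : γ ^ (i : ℕ) ≤ γ ^ ((i : ℕ) - (t : ℕ)) :=
      pow_le_pow_of_le_one (le_of_lt hγ0) hγ1 (Nat.sub_le _ _)
    calc γ ^ ((i : ℕ) - (t : ℕ)) * Real.log (π (s t) g (a t))
        ≤ γ ^ (i : ℕ) * Real.log (π (s t) g (a t)) :=
          mul_le_mul_of_nonpos_right hpow hlog
      _ = Real.log (π (s t) g (a t)) * γ ^ (i : ℕ) := mul_comm _ _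
  · simp [h]
end

section
/- Let h : S × A × G → ℝ satisfy h(s,a,g) ≥ 1 for all (s,a,g). For every fixed goal g ∈ G and every fixed trajectory (s, a): Σ_{t=1}^T log π(a_t|s_t,g) · Σ_{i=t}^T γ^{i−1}·1[φ(s_i)=g] ≥ Σ_{t=1}^T Σ_{i=t}^T γ^{i−t}·h(s_t,a_t,φ(s_i))·1[φ(s_i)=g]·log π(a_t|s_t,φ(s_i)). -/
/-- for `h : S × A × G → ℝ` with `h ≥ 1`, every fixed goal `g` and
fixed trajectory `(s, a)` (0-based indexing, so `γ^{i−1}` is `γ^(i:ℕ)`):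
`Σ_{t=1}^T log π(a_t|s_t,g) · Σ_{i=t}^T γ^{i−1}·1[φ(s_i)=g]
   ≥ Σ_{t=1}^T Σ_{i=t}^T γ^{i−t}·h(s_t,a_t,φ(s_i))·1[φ(s_i)=g]·log π(a_t|s_t,φ(s_i))`. -/
theorem stmt4 {S A G : Type} [DecidableEq G]
    (T : ℕ) (hT : 1 ≤ T) (φ : S → G)
    (γ : ℝ) (hγ0 : 0 < γ) (hγ1 : γ ≤ 1)
    (π : S → G → A → ℝ)
    (hπ0 : ∀ s g a, 0 < π s g a) (hπ1 : ∀ s g a, π s g a ≤ 1)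
    (h : S → A → G → ℝ) (hh : ∀ s a g, 1 ≤ h s a g)
    (g : G) (s : Fin T → S) (a : Fin T → A) :
    ∑ t : Fin T, Real.log (π (s t) g (a t)) *
        ∑ i ∈ Finset.Ici t, γ ^ (i : ℕ) * (if φ (s i) = g then (1 : ℝ) else 0) ≥
      ∑ t : Fin T, ∑ i ∈ Finset.Ici t,
        γ ^ ((i : ℕ) - (t : ℕ)) * h (s t) (a t) (φ (s i)) *
          (if φ (s i) = g then (1 : ℝ) else 0) *
            Real.log (π (s t) (φ (s i)) (a t)) := by
  rw [ge_iff_le]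
  refine Finset.sum_le_sum fun t _ => ?_
  rw [Finset.mul_sum]
  refine Finset.sum_le_sum fun i hi => ?_
  by_cases hc : φ (s i) = g
  · simp only [hc, if_pos rfl, if_true, eq_self_iff_true, mul_one]
    set L := Real.log (π (s t) g (a t)) with hL
    have hL0 : L ≤ 0 := Real.log_nonpos (le_of_lt (hπ0 _ _ _)) (hπ1 _ _ _)
    have h1 : γ ^ ((i : ℕ) - (t : ℕ)) * h (s t) (a t) g * L ≤ γ ^ ((i : ℕ) - (t : ℕ)) * L := by
      have hgp : (0:ℝ) ≤ γ ^ ((i : ℕ) - (t : ℕ)) := le_of_lt (pow_pos hγ0 _)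
      have hhl : h (s t) (a t) g * L ≤ L := by nlinarith [hh (s t) (a t) g]
      calc γ ^ ((i : ℕ) - (t : ℕ)) * h (s t) (a t) g * L
          = γ ^ ((i : ℕ) - (t : ℕ)) * (h (s t) (a t) g * L) := by ring
        _ ≤ γ ^ ((i : ℕ) - (t : ℕ)) * L := mul_le_mul_of_nonneg_left hhl hgp
    have h2 : γ ^ (i : ℕ) ≤ γ ^ ((i : ℕ) - (t : ℕ)) :=
      pow_le_pow_of_le_one (le_of_lt hγ0) hγ1 (Nat.sub_le _ _)
    have h3 : γ ^ ((i : ℕ) - (t : ℕ)) * L ≤ γ ^ (i : ℕ) * L :=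
      mul_le_mul_of_nonpos_right h2 hL0
    calc γ ^ ((i : ℕ) - (t : ℕ)) * h (s t) (a t) g * L ≤ γ ^ ((i : ℕ) - (t : ℕ)) * L := h1
      _ ≤ γ ^ (i : ℕ) * L := h3
      _ = L * γ ^ (i : ℕ) := mul_comm _ _
  · simp [hc]
end

section
/- Let D be a nonempty finite multiset of trajectories and let D^p be the sub-multiset of D consisting of the trajectories τ such that φ(τ_i) = g for some i ∈ {1,…,T}. Let E be a finite multiset of trajectories such that R(τ′) ≥ R(σ) for every τ′ ∈ E and every σ ∈ D, and suppose the multiset D^p + E is nonempty. Then the average of R over D^p + E is greater than or equal to the average of R over D. -/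
/-- The discounted return of a trajectory `τ : Fin T → S` with respect to goal `g`:
`R(τ) = Σ_{i=1}^T γ^{i−1}·1[φ(τ_i)=g]` (0-based indexing, so `γ^{i−1}` is `γ^(i:ℕ)`). -/
noncomputable def Ret {S G : Type} [DecidableEq G] (T : ℕ) (φ : S → G) (γ : ℝ) (g : G)
    (τ : Fin T → S) : ℝ :=
  ∑ i : Fin T, γ ^ (i : ℕ) * (if φ (τ i) = g then (1 : ℝ) else 0)

/-- let `D` be a nonempty finite multiset of trajectories, `D^p ⊆ D` those
trajectories reaching `g`, and `E` a finite multiset of trajectories whose returns dominate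
the return of every trajectory of `D`, with `D^p + E` nonempty. Then the average of `R`
over `D^p + E` is at least the average of `R` over `D`. -/
theorem stmt6 {S G : Type} [DecidableEq G]
    (T : ℕ) (hT : 1 ≤ T) (φ : S → G)
    (γ : ℝ) (hγ0 : 0 < γ) (hγ1 : γ ≤ 1) (g : G)
    (D E : Multiset (Fin T → S)) (hD : D ≠ 0)
    (hE : ∀ τ' ∈ E, ∀ σ ∈ D, Ret T φ γ g σ ≤ Ret T φ γ g τ')
    (hne : D.filter (fun τ => ∃ i : Fin T, φ (τ i) = g) + E ≠ 0) :
    ((D.filter (fun τ => ∃ i : Fin T, φ (τ i) = g) + E).map (Ret T φ γ g)).sum /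
        ((Multiset.card (D.filter (fun τ => ∃ i : Fin T, φ (τ i) = g) + E) : ℝ)) ≥
      ((D.map (Ret T φ γ g)).sum / (Multiset.card D : ℝ)) := by
  classical
  set R := Ret T φ γ g with hRdef
  set P : (Fin T → S) → Prop := fun τ => ∃ i : Fin T, φ (τ i) = g with hP
  set Dp := D.filter P with hDp
  -- returns are nonnegative
  have hR0 : ∀ τ, 0 ≤ R τ := by
    intro τ
    apply Finset.sum_nonneg
    intro i _
    have : (0:ℝ) ≤ γ ^ (i:ℕ) := pow_nonneg hγ0.le _
    positivity
  -- sum over D equals sum over Dp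
  have hsum : (D.map R).sum = (Dp.map R).sum := by
    conv_lhs => rw [← Multiset.filter_add_not P D]
    rw [Multiset.map_add, Multiset.sum_add]
    have : ((D.filter (fun a => ¬ P a)).map R).sum = 0 := by
      apply Multiset.sum_eq_zero
      intro x hx
      rw [Multiset.mem_map] at hx
      obtain ⟨τ, hτ, rfl⟩ := hx
      have hnp : ¬ P τ := (Multiset.mem_filter.mp hτ).2
      rw [hRdef]
      unfold Ret
      apply Finset.sum_eq_zero
      intro i _
      simp [not_exists.mp hnp i]
    rw [this, add_zero]
  have hA0 : 0 ≤ (Dp.map R).sum := by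
    apply Multiset.sum_nonneg
    intro x hx
    rw [Multiset.mem_map] at hx
    obtain ⟨τ, _, rfl⟩ := hx
    exact hR0 τ
  have hNpos : (0:ℝ) < (Multiset.card D : ℝ) := by
    have : D.card ≠ 0 := by simpa [Multiset.card_eq_zero] using hD
    exact_mod_cast Nat.pos_of_ne_zero this
  have hMpos : (0:ℝ) < (Multiset.card (Dp + E) : ℝ) := by
    have : (Dp + E).card ≠ 0 := by simpa [Multiset.card_eq_zero] using hne
    exact_mod_cast Nat.pos_of_ne_zero this
  -- each element of E dominates the average of D
  have hkey : ∀ τ' ∈ E, (Dp.map R).sum ≤ (Multiset.card D : ℝ) * R τ' := by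
    intro τ' hτ'
    rw [← hsum]
    calc (D.map R).sum ≤ (D.map (fun _ => R τ')).sum := by
          apply Multiset.sum_map_le_sum_map
          intro σ hσ
          exact hE τ' hτ' σ hσ
      _ = (Multiset.card D : ℝ) * R τ' := by
          simp [Multiset.map_const', mul_comm]
  have hcard : (Multiset.card Dp : ℝ) ≤ (Multiset.card D : ℝ) := by
    exact_mod_cast Multiset.card_le_card (Multiset.filter_le P D)
  -- sum over E bound
  have hEsum : (Multiset.card E : ℝ) * (Dp.map R).sum
      ≤ (Multiset.card D : ℝ) * (E.map R).sum := by
    calc (Multiset.card E : ℝ) * (Dp.map R).sum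
        = (E.map (fun _ => (Dp.map R).sum)).sum := by
          simp [Multiset.map_const', mul_comm]
      _ ≤ (E.map (fun τ' => (Multiset.card D : ℝ) * R τ')).sum := by
          apply Multiset.sum_map_le_sum_map
          intro τ' hτ'
          exact hkey τ' hτ'
      _ = (Multiset.card D : ℝ) * (E.map R).sum := by
          rw [Multiset.sum_map_mul_left]
  rw [ge_iff_le, hsum, div_le_div_iff₀ hNpos hMpos]
  have hcards : (Multiset.card (Dp + E) : ℝ)
      = (Multiset.card Dp : ℝ) + (Multiset.card E : ℝ) := by
    push_cast [Multiset.card_add]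
    ring
  rw [hcards, Multiset.map_add, Multiset.sum_add]
  have h1 : (Dp.map R).sum * (Multiset.card Dp : ℝ)
      ≤ (Dp.map R).sum * (Multiset.card D : ℝ) := by
    exact mul_le_mul_of_nonneg_left hcard hA0
  nlinarith [hEsum, h1]
end

section
/- log J(π) ≥ Σ_g p(g)·[ log C(g) + Σ_τ (π_b(τ|g)·R(τ,g)/C(g))·( log π(τ|g) − log π_b(τ|g) ) ]. -/
lemma jensen_log {ι : Type*} [Fintype ι] (w x : ι → ℝ)
    (hw : ∀ i, 0 ≤ w i) (hw1 : ∑ i, w i = 1) (hx : ∀ i, 0 < x i) :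
    ∑ i, w i * Real.log (x i) ≤ Real.log (∑ i, w i * x i) := by
  have := (strictConcaveOn_log_Ioi.concaveOn).le_map_sum
    (t := Finset.univ) (w := w) (p := x)
    (fun i _ => hw i) hw1 (fun i _ => hx i)
  simpa [smul_eq_mul] using this

/-- with `C(g) = Σ_τ π_b(τ|g)·R(τ,g) > 0` and
`J(π) = Σ_g p(g)·Σ_τ π(τ|g)·R(τ,g)`, the Jensen lower bound
`log J(π) ≥ Σ_g p(g)·[ log C(g) + Σ_τ (π_b(τ|g)·R(τ,g)/C(g))·(log π(τ|g) − log π_b(τ|g)) ]`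
holds. -/
theorem stmt9 {G Ω : Type} [Fintype G] [Fintype Ω]
    (p : G → ℝ) (hp0 : ∀ g, 0 < p g) (hp1 : ∑ g, p g = 1)
    (πb π : G → Ω → ℝ)
    (hπb0 : ∀ g τ, 0 < πb g τ) (hπb1 : ∀ g, ∑ τ, πb g τ = 1)
    (hπ0 : ∀ g τ, 0 < π g τ) (hπ1 : ∀ g, ∑ τ, π g τ = 1)
    (R : Ω → G → ℝ) (hR : ∀ τ g, 0 ≤ R τ g)
    (hC : ∀ g, 0 < ∑ τ, πb g τ * R τ g) :
    Real.log (∑ g, p g * ∑ τ, π g τ * R τ g) ≥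
      ∑ g, p g * (Real.log (∑ τ, πb g τ * R τ g) +
        ∑ τ, (πb g τ * R τ g / (∑ τ', πb g τ' * R τ' g)) *
          (Real.log (π g τ) - Real.log (πb g τ))) := by
  set A : G → ℝ := fun g => ∑ τ, π g τ * R τ g with hA
  set C : G → ℝ := fun g => ∑ τ, πb g τ * R τ g with hCdef
  have hA0 : ∀ g, 0 < A g := by
    intro g
    obtain ⟨τ, -, hτ⟩ : ∃ τ ∈ Finset.univ, 0 < πb g τ * R τ g := by
      by_contra h
      push_neg at h
      have : C g ≤ 0 := Finset.sum_nonpos (fun τ _ => h τ (Finset.mem_univ τ))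
      exact absurd this (not_le.mpr (hC g))
    have hRτ : 0 < R τ g := by
      rcases (hR τ g).lt_or_eq with h | h
      · exact h
      · simp [← h] at hτ
    exact Finset.sum_pos' (fun τ _ => mul_nonneg (hπ0 g τ).le (hR τ g))
      ⟨τ, Finset.mem_univ τ, mul_pos (hπ0 g τ) hRτ⟩
  -- inner Jensen per goal g
  have key : ∀ g, Real.log (C g) +
      ∑ τ, (πb g τ * R τ g / C g) * (Real.log (π g τ) - Real.log (πb g τ))
      ≤ Real.log (A g) := by
    intro g
    set w : Ω → ℝ := fun τ => πb g τ * R τ g / C g with hw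
    have hw0 : ∀ τ, 0 ≤ w τ :=
      fun τ => div_nonneg (mul_nonneg (hπb0 g τ).le (hR τ g)) (hC g).le
    have hw1 : ∑ τ, w τ = 1 := by
      rw [← Finset.sum_div, div_eq_one_iff_eq (hC g).ne']
    set x : Ω → ℝ := fun τ => C g * π g τ / πb g τ with hx
    have hx0 : ∀ τ, 0 < x τ :=
      fun τ => div_pos (mul_pos (hC g) (hπ0 g τ)) (hπb0 g τ)
    have hsum : ∑ τ, w τ * x τ = A g := by
      apply Finset.sum_congr rfl
      intro τ _
      rw [hw, hx, div_mul_div_comm]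
      rw [div_eq_iff (mul_ne_zero (hC g).ne' (hπb0 g τ).ne')]
      ring
    have hlog : ∀ τ, Real.log (x τ) =
        Real.log (C g) + (Real.log (π g τ) - Real.log (πb g τ)) := by
      intro τ
      rw [hx]
      rw [Real.log_div (mul_pos (hC g) (hπ0 g τ)).ne' (hπb0 g τ).ne',
        Real.log_mul (hC g).ne' (hπ0 g τ).ne']
      ring
    have := jensen_log w x hw0 hw1 hx0
    rw [hsum] at this
    calc Real.log (C g) + ∑ τ, w τ * (Real.log (π g τ) - Real.log (πb g τ))
        = ∑ τ, w τ * Real.log (x τ) := by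
          simp only [hlog, mul_add]
          rw [Finset.sum_add_distrib, ← Finset.sum_mul, hw1, one_mul]
      _ ≤ Real.log (A g) := this
  calc ∑ g, p g * (Real.log (C g) +
        ∑ τ, (πb g τ * R τ g / C g) * (Real.log (π g τ) - Real.log (πb g τ)))
      ≤ ∑ g, p g * Real.log (A g) :=
        Finset.sum_le_sum (fun g _ => mul_le_mul_of_nonneg_left (key g) (hp0 g).le)
    _ ≤ Real.log (∑ g, p g * A g) := jensen_log p A (fun g => (hp0 g).le) hp1 hA0
end

section
/- Let C_m := min_g C(g). Then log J(π) ≥ Σ_g p(g)·log C(g) + (1/C_m)·Σ_g p(g)·Σ_τ π_b(τ|g)·R(τ,g)·log π(τ|g) − Σ_g p(g)·Σ_τ (π_b(τ|g)·R(τ,g)/C(g))·log π_b(τ|g). -/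
/-!
Rewrite the inner expectation of each goal under the behaviour policy: with the weights
`w τ = π_b(τ|g) R(τ,g) / C(g)`, which sum to one, `Σ_τ π(τ|g) R(τ,g) = Σ_τ w τ · π(τ|g) C(g) / π_b(τ|g)`,
and Jensen's inequality for the concave `log` gives the bound with `1 / C(g)` in place of `1 / C_m`.
Since `log π ≤ 0`, the cross term only decreases when `C(g)` is replaced by the smaller `C_m`.
A second application of Jensen's inequality, now over goals, moves the `log` outside `Σ_g p(g)`.
-/

open Finset

theorem Real.sum_mul_log_le_log_sum_mul {ι : Type*} [Fintype ι] {w x : ι → ℝ}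
    (hw : ∀ i, 0 ≤ w i) (hw1 : ∑ i, w i = 1) (hx : ∀ i, 0 < x i) :
    ∑ i, w i * Real.log (x i) ≤ Real.log (∑ i, w i * x i) := by
  simpa only [smul_eq_mul] using strictConcaveOn_log_Ioi.concaveOn.le_map_sum
    (fun i _ => hw i) hw1 (fun i _ => Set.mem_Ioi.2 (hx i))

theorem sum_mul_log_nonpos_of_sum_eq_one {ι : Type*} [Fintype ι] {a q : ι → ℝ}
    (ha : ∀ i, 0 ≤ a i) (hq : ∀ i, 0 ≤ q i) (hq1 : ∑ i, q i = 1) :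
    ∑ i, a i * Real.log (q i) ≤ 0 := by
  refine sum_nonpos fun i _ => mul_nonpos_of_nonneg_of_nonpos (ha i) (Real.log_nonpos (hq i) ?_)
  exact hq1 ▸ single_le_sum (fun j _ => hq j) (mem_univ i)

theorem sum_mul_pos_of_sum_mul_pos {ι : Type*} [Fintype ι] {a b r : ι → ℝ}
    (hb : ∀ i, 0 < b i) (hr : ∀ i, 0 ≤ r i) (ha : 0 < ∑ i, a i * r i) :
    0 < ∑ i, b i * r i := by
  obtain ⟨i, -, hi⟩ := exists_lt_of_sum_lt (s := univ) (f := fun _ => (0 : ℝ))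
    (by simpa only [sum_const_zero] using ha)
  have hri : 0 < r i := (hr i).lt_of_ne fun h => by simp [← h] at hi
  exact sum_pos' (fun j _ => mul_nonneg (hb j).le (hr j)) ⟨i, mem_univ i, mul_pos (hb i) hri⟩

section ImportanceWeighting

variable {Ω : Type*} [Fintype Ω] {b q r : Ω → ℝ}

theorem le_log_sum_mul_importance (hb : ∀ τ, 0 < b τ) (hq : ∀ τ, 0 < q τ) (hr : ∀ τ, 0 ≤ r τ)
    (hC : 0 < ∑ τ, b τ * r τ) :
    Real.log (∑ τ, b τ * r τ) + 1 / (∑ τ, b τ * r τ) * ∑ τ, b τ * r τ * Real.log (q τ) -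
      ∑ τ, b τ * r τ / (∑ τ', b τ' * r τ') * Real.log (b τ) ≤
      Real.log (∑ τ, q τ * r τ) := by
  set C := ∑ τ, b τ * r τ
  have hw1 : ∑ τ, b τ * r τ / C = 1 := by rw [← sum_div, div_self hC.ne']
  have hjensen := Real.sum_mul_log_le_log_sum_mul (x := fun τ => q τ * C / b τ)
    (fun τ => div_nonneg (mul_nonneg (hb τ).le (hr τ)) hC.le) hw1
    (fun τ => div_pos (mul_pos (hq τ) hC) (hb τ))
  have hmean : ∀ τ, b τ * r τ / C * (q τ * C / b τ) = q τ * r τ := fun τ => by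
    field_simp [(hb τ).ne', hC.ne']
  have hexpand : ∀ τ, b τ * r τ / C * Real.log (q τ * C / b τ) =
      1 / C * (b τ * r τ * Real.log (q τ)) + b τ * r τ / C * Real.log C -
        b τ * r τ / C * Real.log (b τ) := fun τ => by
    rw [Real.log_div (mul_pos (hq τ) hC).ne' (hb τ).ne', Real.log_mul (hq τ).ne' hC.ne']
    ring
  simp only [hexpand, hmean, sum_sub_distrib, sum_add_distrib, ← mul_sum, ← sum_mul, hw1,
    one_mul] at hjensen
  linarith

theorem le_log_sum_mul_importance_of_le {c : ℝ} (hc : 0 < c) (hcC : c ≤ ∑ τ, b τ * r τ)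
    (hb : ∀ τ, 0 < b τ) (hq : ∀ τ, 0 < q τ) (hq1 : ∑ τ, q τ = 1) (hr : ∀ τ, 0 ≤ r τ) :
    Real.log (∑ τ, b τ * r τ) + 1 / c * ∑ τ, b τ * r τ * Real.log (q τ) -
      ∑ τ, b τ * r τ / (∑ τ', b τ' * r τ') * Real.log (b τ) ≤
      Real.log (∑ τ, q τ * r τ) := by
  have hcross : 1 / c * ∑ τ, b τ * r τ * Real.log (q τ) ≤
      1 / (∑ τ, b τ * r τ) * ∑ τ, b τ * r τ * Real.log (q τ) :=
    mul_le_mul_of_nonpos_right (one_div_le_one_div_of_le hc hcC)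
      (sum_mul_log_nonpos_of_sum_eq_one (fun τ => mul_nonneg (hb τ).le (hr τ))
        (fun τ => (hq τ).le) hq1)
  linarith [le_log_sum_mul_importance hb hq hr (hc.trans_le hcC)]

end ImportanceWeighting

theorem stmt10_general {G Ω : Type} [Fintype G] [Nonempty G] [Fintype Ω]
    (p : G → ℝ) (hp0 : ∀ g, 0 < p g) (hp1 : ∑ g, p g = 1)
    (πb π : G → Ω → ℝ)
    (hπb0 : ∀ g τ, 0 < πb g τ)
    (hπ0 : ∀ g τ, 0 < π g τ) (hπ1 : ∀ g, ∑ τ, π g τ = 1)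
    (R : Ω → G → ℝ) (hR : ∀ τ g, 0 ≤ R τ g)
    (hC : ∀ g, 0 < ∑ τ, πb g τ * R τ g) :
    Real.log (∑ g, p g * ∑ τ, π g τ * R τ g) ≥
      (∑ g, p g * Real.log (∑ τ, πb g τ * R τ g)) +
      (1 / Finset.univ.inf' Finset.univ_nonempty (fun g => ∑ τ, πb g τ * R τ g)) *
        (∑ g, p g * ∑ τ, πb g τ * R τ g * Real.log (π g τ)) -
      ∑ g, p g * ∑ τ, (πb g τ * R τ g / (∑ τ', πb g τ' * R τ' g)) *
        Real.log (πb g τ) := by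
  set Cm := univ.inf' univ_nonempty fun g => ∑ τ, πb g τ * R τ g
  have hCm : 0 < Cm := (lt_inf'_iff _).2 fun g _ => hC g
  have hgoal : ∀ g, Real.log (∑ τ, πb g τ * R τ g) +
      1 / Cm * ∑ τ, πb g τ * R τ g * Real.log (π g τ) -
      ∑ τ, πb g τ * R τ g / (∑ τ', πb g τ' * R τ' g) * Real.log (πb g τ) ≤
      Real.log (∑ τ, π g τ * R τ g) := fun g =>
    le_log_sum_mul_importance_of_le hCm (inf'_le _ (mem_univ g)) (hπb0 g) (hπ0 g) (hπ1 g)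
      (fun τ => hR τ g)
  calc _ = ∑ g, p g * (Real.log (∑ τ, πb g τ * R τ g) +
          1 / Cm * ∑ τ, πb g τ * R τ g * Real.log (π g τ) -
          ∑ τ, πb g τ * R τ g / (∑ τ', πb g τ' * R τ' g) * Real.log (πb g τ)) := by
        simp only [mul_sub, mul_add, sum_sub_distrib, sum_add_distrib, mul_left_comm (p _),
          ← mul_sum]
    _ ≤ ∑ g, p g * Real.log (∑ τ, π g τ * R τ g) :=
        sum_le_sum fun g _ => mul_le_mul_of_nonneg_left (hgoal g) (hp0 g).le
    _ ≤ _ := Real.sum_mul_log_le_log_sum_mul (fun g => (hp0 g).le) hp1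
        fun g => sum_mul_pos_of_sum_mul_pos (hπ0 g) (fun τ => hR τ g) (hC g)

/-- with `C(g) = Σ_τ π_b(τ|g)·R(τ,g) > 0`, `C_m = min_g C(g)` and
`J(π) = Σ_g p(g)·Σ_τ π(τ|g)·R(τ,g)`, it holds that
`log J(π) ≥ Σ_g p(g)·log C(g) + (1/C_m)·Σ_g p(g)·Σ_τ π_b(τ|g)·R(τ,g)·log π(τ|g)
  − Σ_g p(g)·Σ_τ (π_b(τ|g)·R(τ,g)/C(g))·log π_b(τ|g)`. -/
theorem stmt10 {G Ω : Type} [Fintype G] [Nonempty G] [Fintype Ω]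
    (p : G → ℝ) (hp0 : ∀ g, 0 < p g) (hp1 : ∑ g, p g = 1)
    (πb π : G → Ω → ℝ)
    (hπb0 : ∀ g τ, 0 < πb g τ) (hπb1 : ∀ g, ∑ τ, πb g τ = 1)
    (hπ0 : ∀ g τ, 0 < π g τ) (hπ1 : ∀ g, ∑ τ, π g τ = 1)
    (R : Ω → G → ℝ) (hR : ∀ τ g, 0 ≤ R τ g)
    (hC : ∀ g, 0 < ∑ τ, πb g τ * R τ g) :
    Real.log (∑ g, p g * ∑ τ, π g τ * R τ g) ≥
      (∑ g, p g * Real.log (∑ τ, πb g τ * R τ g)) +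
      (1 / Finset.univ.inf' Finset.univ_nonempty (fun g => ∑ τ, πb g τ * R τ g)) *
        (∑ g, p g * ∑ τ, πb g τ * R τ g * Real.log (π g τ)) -
      ∑ g, p g * ∑ τ, (πb g τ * R τ g / (∑ τ', πb g τ' * R τ' g)) *
        Real.log (πb g τ) :=
  stmt10_general p hp0 hp1 πb π hπb0 hπ0 hπ1 R hR hC
end

section
/- The derivative of J at the behavior parameter θ_b equals T times the derivative of J_surr at θ_b; that is, J′(θ_b) = T·J_surr′(θ_b). -/
/-! By the product rule, `∂_θ P_θ(τ|g)` at `θ_b` is `Σ_t W_t(τ)`, where `W_t` is the trajectory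
weight with the step-`t` policy factor `π_{θ_b}(a_t|s_t,g)` replaced by its derivative; and
`W_t = P_{θ_b}(τ|g) · ∂_θ log π_θ(a_t|s_t,g)`, which is what differentiating `J_surr` produces.
So `J′(θ_b) - T·J_surr′(θ_b)` only collects the terms `Σ_τ W_t(τ) · r_i(τ)` with a reward at a time
`i < t`, and each of them vanishes: summing out the path from the end, every step after `t`
contributes `Σ_{s',a} P(s'|s,a) π_{θ_b}(a|s',g) = 1` and step `t` contributes
`Σ_a ∂_θ π_θ(a|s',g) = ∂_θ 1 = 0`, while `r_i` only sees the path before `t`. -/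

/-- Probability of the trajectory `τ = (s_1,a_1,…,s_T,a_T)` given goal `g` under the
parameterized policy at parameter `θ`:
`P_θ(τ|g) = ρ(s_1)·Π_{t=1}^T π_θ(a_t|s_t,g)·Π_{t=1}^{T−1} P(s_{t+1}|s_t,a_t)`
(0-based indexing; the transition factor is 1 at the last step). -/
noncomputable def Ptraj {S A G : Type} [Fintype S] [Fintype A]
    (T : ℕ) (hT : 1 ≤ T) (ρ : S → ℝ) (P : S → S → A → ℝ)
    (π : ℝ → S → G → A → ℝ) (θ : ℝ) (g : G)
    (τ : (Fin T → S) × (Fin T → A)) : ℝ :=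
  ρ (τ.1 ⟨0, hT⟩) * (∏ t : Fin T, π θ (τ.1 t) g (τ.2 t)) *
    ∏ t : Fin T,
      (if h : (t : ℕ) + 1 < T then P (τ.1 ⟨(t : ℕ) + 1, h⟩) (τ.1 t) (τ.2 t) else 1)

open Finset

section PathWeight

variable {X : Type*} (μ : X → ℝ) (K : ℕ → X → X → ℝ)

noncomputable def pathWeight (n : ℕ) (f : Fin (n + 1) → X) : ℝ :=
  μ (f 0) * ∏ i : Fin n, K i (f i.castSucc) (f i.succ)

theorem pathWeight_snoc (n : ℕ) (f : Fin (n + 1) → X) (x : X) :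
    pathWeight μ K (n + 1) (Fin.snoc f x) = pathWeight μ K n f * K n (f (Fin.last n)) x := by
  have hsucc (i : Fin n) : (Fin.snoc f x : Fin (n + 2) → X) i.castSucc.succ = f i.succ := by
    rw [Fin.succ_castSucc, Fin.snoc_castSucc]
  simp [pathWeight, Fin.prod_univ_castSucc, mul_assoc, hsucc]

theorem sum_pathWeight_succ_mul_take [Fintype X] {m n : ℕ} (hmn : m ≤ n)
    (B : (Fin (m + 1) → X) → ℝ) :
    ∑ f : Fin (n + 2) → X, pathWeight μ K (n + 1) f * B (Fin.take (m + 1) (by omega) f)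
      = ∑ f : Fin (n + 1) → X, pathWeight μ K n f * B (Fin.take (m + 1) (by omega) f) *
          ∑ x, K n (f (Fin.last n)) x := by
  rw [← (Fin.snocEquiv fun _ => X).sum_comp, Fintype.sum_prod_type_right]
  refine sum_congr rfl fun f _ => ?_
  rw [mul_sum]
  refine sum_congr rfl fun x _ => ?_
  have htake : Fin.take (m + 1) (by omega) (Fin.snoc f x : Fin (n + 2) → X)
      = Fin.take (m + 1) (by omega) f :=
    congrArg (Fin.take (m + 1) (by omega)) (Fin.init_snoc (α := fun _ => X) x f)
  simp only [Fin.snocEquiv, Equiv.coe_fn_mk, pathWeight_snoc, htake]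
  ring

theorem sum_pathWeight_mul_take [Fintype X] {m n : ℕ} (hmn : m ≤ n)
    (hK : ∀ j, m ≤ j → j < n → ∀ x, ∑ y, K j x y = 1) (B : (Fin (m + 1) → X) → ℝ) :
    ∑ f : Fin (n + 1) → X, pathWeight μ K n f * B (Fin.take (m + 1) (by omega) f)
      = ∑ f : Fin (m + 1) → X, pathWeight μ K m f * B f := by
  induction n, hmn using Nat.le_induction with
  | base => simp
  | succ n hmn ih =>
    rw [sum_pathWeight_succ_mul_take μ K hmn, ← ih fun j hj hjn => hK j hj (by omega)]
    simp only [hK n hmn (by omega), mul_one]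

theorem sum_pathWeight_mul_take_eq_zero [Fintype X] {m n : ℕ} (hmn : m < n)
    (hKm : ∀ x, ∑ y, K m x y = 0) (hK : ∀ j, m < j → j < n → ∀ x, ∑ y, K j x y = 1)
    (B : (Fin (m + 1) → X) → ℝ) :
    ∑ f : Fin (n + 1) → X, pathWeight μ K n f * B (Fin.take (m + 1) (by omega) f) = 0 := by
  have h := sum_pathWeight_mul_take μ K hmn hK fun f => B (Fin.take (m + 1) (by omega) f)
  simp only [Fin.take_take] at h
  rw [h, sum_pathWeight_succ_mul_take μ K le_rfl]
  simp [hKm]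

end PathWeight

section Trajectory

variable {S A : Type}

noncomputable def trajWeight (T : ℕ) (hT : 1 ≤ T) (ρ : S → ℝ) (P : S → S → A → ℝ)
    (c : ℕ → S → A → ℝ) (τ : (Fin T → S) × (Fin T → A)) : ℝ :=
  ρ (τ.1 ⟨0, hT⟩) * (∏ t : Fin T, c t (τ.1 t) (τ.2 t)) *
    ∏ t : Fin T,
      (if h : (t : ℕ) + 1 < T then P (τ.1 ⟨(t : ℕ) + 1, h⟩) (τ.1 t) (τ.2 t) else 1)

theorem trajWeight_eq_pathWeight (n : ℕ) (hT : 1 ≤ n + 1) (ρ : S → ℝ) (P : S → S → A → ℝ)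
    (c : ℕ → S → A → ℝ) (τ : (Fin (n + 1) → S) × (Fin (n + 1) → A)) :
    trajWeight (n + 1) hT ρ P c τ
      = pathWeight (fun x => ρ x.1 * c 0 x.1 x.2) (fun j x y => P y.1 x.1 x.2 * c (j + 1) y.1 y.2)
          n (fun u => (τ.1 u, τ.2 u)) := by
  have hpolicy : ∏ t : Fin (n + 1), c t (τ.1 t) (τ.2 t)
      = c 0 (τ.1 0) (τ.2 0) * ∏ i : Fin n, c (i + 1) (τ.1 i.succ) (τ.2 i.succ) :=
    Fin.prod_univ_succ _
  have htransition : ∏ t : Fin (n + 1),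
      (if h : (t : ℕ) + 1 < n + 1 then P (τ.1 ⟨(t : ℕ) + 1, h⟩) (τ.1 t) (τ.2 t) else 1)
      = ∏ i : Fin n, P (τ.1 i.succ) (τ.1 i.castSucc) (τ.2 i.castSucc) := by
    rw [Fin.prod_univ_castSucc]
    simp [Fin.succ]
  rw [trajWeight, pathWeight, hpolicy, htransition, prod_mul_distrib,
    show (⟨0, hT⟩ : Fin (n + 1)) = 0 from rfl]
  ring

theorem sum_trajWeight_mul_take_eq_zero [Fintype S] [Fintype A] {m n : ℕ} (hmn : m < n)
    (hT : 1 ≤ n + 1) (ρ : S → ℝ) (P : S → S → A → ℝ) (hP : ∀ s a, ∑ s', P s' s a = 1)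
    {c : ℕ → S → A → ℝ} (hc_zero : ∀ s, ∑ a, c (m + 1) s a = 0)
    (hc_one : ∀ u, m + 1 < u → u ≤ n → ∀ s, ∑ a, c u s a = 1) (B : (Fin (m + 1) → S × A) → ℝ) :
    ∑ τ : (Fin (n + 1) → S) × (Fin (n + 1) → A),
      trajWeight (n + 1) hT ρ P c τ * B (Fin.take (m + 1) (by omega) fun u => (τ.1 u, τ.2 u))
      = 0 := by
  have hkernel (j : ℕ) (x : S × A) : ∑ y : S × A, P y.1 x.1 x.2 * c (j + 1) y.1 y.2
      = ∑ s, P s x.1 x.2 * ∑ a, c (j + 1) s a := by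
    simp_rw [Fintype.sum_prod_type, mul_sum]
  rw [← (Equiv.arrowProdEquivProdArrow _ (fun _ => S) (fun _ => A)).sum_comp]
  simp only [trajWeight_eq_pathWeight]
  apply sum_pathWeight_mul_take_eq_zero _ _ hmn
  · intro x
    simp [hkernel, hc_zero]
  · intro j hj hjn x
    simp [hkernel, hc_one (j + 1) (by omega) (by omega), hP]

end Trajectory

section Policy

variable {S A G : Type} (π : ℝ → S → G → A → ℝ) (θb : ℝ) (g : G)

noncomputable def derivAtStep (t u : ℕ) (s : S) (a : A) : ℝ :=
  if u = t then deriv (fun θ => π θ s g a) θb else π θb s g a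

theorem sum_derivAtStep [Fintype A] (hπ1 : ∀ θ s, ∑ a, π θ s g a = 1)
    (hdiff : ∀ s a, DifferentiableAt ℝ (fun θ => π θ s g a) θb) (t u : ℕ) (s : S) :
    ∑ a, derivAtStep π θb g t u s a = if u = t then 0 else 1 := by
  unfold derivAtStep
  split_ifs
  · rw [← deriv_fun_sum fun a _ => hdiff s a]
    simp [hπ1]
  · exact hπ1 θb s

theorem prod_derivAtStep {T : ℕ} (τ : (Fin T → S) × (Fin T → A)) (t : Fin T) :
    ∏ u : Fin T, derivAtStep π θb g t u (τ.1 u) (τ.2 u)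
      = (∏ u ∈ univ.erase t, π θb (τ.1 u) g (τ.2 u)) *
          deriv (fun θ => π θ (τ.1 t) g (τ.2 t)) θb := by
  rw [← prod_erase_mul _ _ (mem_univ t)]
  congr 1
  · refine prod_congr rfl fun u hu => ?_
    simp [derivAtStep, Fin.val_inj, ne_of_mem_erase hu]
  · simp [derivAtStep]

variable [Fintype S] [Fintype A] {T : ℕ} (hT : 1 ≤ T) (ρ : S → ℝ) (P : S → S → A → ℝ)

theorem hasDerivAt_Ptraj (hdiff : ∀ s a, DifferentiableAt ℝ (fun θ => π θ s g a) θb)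
    (τ : (Fin T → S) × (Fin T → A)) :
    HasDerivAt (fun θ => Ptraj T hT ρ P π θ g τ)
      (∑ t : Fin T, trajWeight T hT ρ P (derivAtStep π θb g t) τ) θb := by
  have hprod := HasDerivAt.fun_finsetProd (u := univ) fun t _ =>
    (hdiff (τ.1 t) (τ.2 t)).hasDerivAt
  refine ((hprod.const_mul (ρ (τ.1 ⟨0, hT⟩))).mul_const (∏ t : Fin T,
    (if h : (t : ℕ) + 1 < T then P (τ.1 ⟨(t : ℕ) + 1, h⟩) (τ.1 t) (τ.2 t) else 1))).congr_deriv ?_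
  simp only [trajWeight, prod_derivAtStep, smul_eq_mul, mul_sum, sum_mul]

theorem Ptraj_mul_div_eq_trajWeight (τ : (Fin T → S) × (Fin T → A)) (t : Fin T)
    (hne : π θb (τ.1 t) g (τ.2 t) ≠ 0) :
    Ptraj T hT ρ P π θb g τ *
        (deriv (fun θ => π θ (τ.1 t) g (τ.2 t)) θb / π θb (τ.1 t) g (τ.2 t))
      = trajWeight T hT ρ P (derivAtStep π θb g t) τ := by
  rw [Ptraj, trajWeight, prod_derivAtStep, ← prod_erase_mul _ _ (mem_univ t)]
  field_simp

theorem sum_trajWeight_derivAtStep_mul_eq_zero (hP : ∀ s a, ∑ s', P s' s a = 1)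
    (hπ1 : ∀ θ s, ∑ a, π θ s g a = 1) (hdiff : ∀ s a, DifferentiableAt ℝ (fun θ => π θ s g a) θb)
    (r : S → ℝ) {i t : Fin T} (hit : i < t) :
    ∑ τ, trajWeight T hT ρ P (derivAtStep π θb g t) τ * r (τ.1 i) = 0 := by
  obtain ⟨n, rfl⟩ : ∃ n, T = n + 1 := ⟨T - 1, by omega⟩
  obtain ⟨m, hm⟩ : ∃ m, (t : ℕ) = m + 1 := ⟨t - 1, by omega⟩
  have hit' : (i : ℕ) < m + 1 := by omega
  have h := sum_trajWeight_mul_take_eq_zero (m := m) (by omega) hT ρ P hP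
    (c := derivAtStep π θb g t)
    (fun s => by rw [sum_derivAtStep π θb g hπ1 hdiff, if_pos hm.symm])
    (fun u hu _ s => by rw [sum_derivAtStep π θb g hπ1 hdiff, if_neg (by omega)])
    (fun x => r (x ⟨i, hit'⟩).1)
  simpa using h

theorem sum_trajWeight_derivAtStep_mul_return (hP : ∀ s a, ∑ s', P s' s a = 1)
    (hπ1 : ∀ θ s, ∑ a, π θ s g a = 1) (hdiff : ∀ s a, DifferentiableAt ℝ (fun θ => π θ s g a) θb)
    (r : Fin T → S → ℝ) (t : Fin T) :
    ∑ τ, trajWeight T hT ρ P (derivAtStep π θb g t) τ * ∑ i, r i (τ.1 i)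
      = ∑ τ, trajWeight T hT ρ P (derivAtStep π θb g t) τ * ∑ i ∈ Ici t, r i (τ.1 i) := by
  have hsplit (τ : (Fin T → S) × (Fin T → A)) :
      ∑ i, r i (τ.1 i) = ∑ i ∈ Ici t, r i (τ.1 i) + ∑ i ∈ Iio t, r i (τ.1 i) := by
    rw [← sum_filter_add_sum_filter_not univ (t ≤ ·)]
    congr 2 <;> ext i <;> simp
  simp_rw [hsplit, mul_add, sum_add_distrib, mul_sum (s := Iio t)]
  rw [sum_comm (s := univ) (t := Iio t), add_eq_left]
  exact sum_eq_zero fun i hi =>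
    sum_trajWeight_derivAtStep_mul_eq_zero π θb g hT ρ P hP hπ1 hdiff (r i) (mem_Iio.mp hi)

theorem sum_deriv_mul_return_eq_sum_score_mul_rewardToGo (hP : ∀ s a, ∑ s', P s' s a = 1)
    (hπ1 : ∀ θ s, ∑ a, π θ s g a = 1) (hdiff : ∀ s a, DifferentiableAt ℝ (fun θ => π θ s g a) θb)
    (hπb : ∀ s a, 0 < π θb s g a) (r : Fin T → S → ℝ) :
    ∑ τ, (∑ t : Fin T, trajWeight T hT ρ P (derivAtStep π θb g t) τ) * ∑ i, r i (τ.1 i)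
      = ∑ τ, Ptraj T hT ρ P π θb g τ * ∑ t : Fin T,
          deriv (fun θ => π θ (τ.1 t) g (τ.2 t)) θb / π θb (τ.1 t) g (τ.2 t) *
            ∑ i ∈ Ici t, r i (τ.1 i) := by
  calc _ = ∑ t : Fin T, ∑ τ,
          trajWeight T hT ρ P (derivAtStep π θb g t) τ * ∑ i, r i (τ.1 i) := by
        simp only [sum_mul]
        exact sum_comm
    _ = ∑ t : Fin T, ∑ τ,
          trajWeight T hT ρ P (derivAtStep π θb g t) τ * ∑ i ∈ Ici t, r i (τ.1 i) :=
        sum_congr rfl fun t _ =>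
          sum_trajWeight_derivAtStep_mul_return π θb g hT ρ P hP hπ1 hdiff r t
    _ = _ := by
        rw [sum_comm]
        refine sum_congr rfl fun τ _ => ?_
        rw [mul_sum]
        refine sum_congr rfl fun t _ => ?_
        rw [← mul_assoc, Ptraj_mul_div_eq_trajWeight π θb g hT ρ P τ t (hπb _ _).ne']

end Policy

theorem stmt11_general {S A G : Type} [Fintype S] [Fintype A] [Fintype G] [DecidableEq G]
    (T : ℕ) (hT : 1 ≤ T) (φ : S → G)
    (γ : ℝ)
    (p : G → ℝ)
    (ρ : S → ℝ)
    (P : S → S → A → ℝ)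
    (hP1 : ∀ s a, ∑ s', P s' s a = 1)
    (π : ℝ → S → G → A → ℝ)
    (hπ1 : ∀ θ s g, ∑ a, π θ s g a = 1)
    (hdiff : ∀ s g a, Differentiable ℝ (fun θ => π θ s g a))
    (θb : ℝ) (hπb : ∀ s g a, 0 < π θb s g a) :
    deriv (fun θ => ∑ g, p g * ∑ τ : (Fin T → S) × (Fin T → A),
        Ptraj T hT ρ P π θ g τ *
          ∑ i : Fin T, γ ^ (i : ℕ) * (if φ (τ.1 i) = g then (1 : ℝ) else 0)) θb
      = (T : ℝ) * deriv (fun θ => (1 / (T : ℝ)) * ∑ g, p g *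
          ∑ τ : (Fin T → S) × (Fin T → A), Ptraj T hT ρ P π θb g τ *
            ∑ t : Fin T, Real.log (π θ (τ.1 t) g (τ.2 t)) *
              ∑ i ∈ Finset.Ici t, γ ^ (i : ℕ) *
                (if φ (τ.1 i) = g then (1 : ℝ) else 0)) θb := by
  have hdiffAt (g : G) (s : S) (a : A) : DifferentiableAt ℝ (fun θ => π θ s g a) θb :=
    hdiff s g a θb
  have hJ := HasDerivAt.fun_sum (u := univ) fun g _ => (HasDerivAt.fun_sum (u := univ)
    fun τ _ => (hasDerivAt_Ptraj π θb g hT ρ P (hdiffAt g) τ).mul_const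
      (∑ i : Fin T, γ ^ (i : ℕ) * (if φ (τ.1 i) = g then (1 : ℝ) else 0))).const_mul (p g)
  have hJsurr := (HasDerivAt.fun_sum (u := univ) fun g _ => (HasDerivAt.fun_sum (u := univ)
    fun τ _ => (HasDerivAt.fun_sum (u := univ) fun (t : Fin T) _ =>
      ((hdiffAt g (τ.1 t) (τ.2 t)).hasDerivAt.log (hπb (τ.1 t) g (τ.2 t)).ne').mul_const
        (∑ i ∈ Ici t, γ ^ (i : ℕ) * (if φ (τ.1 i) = g then (1 : ℝ) else 0))).const_mul
          (Ptraj T hT ρ P π θb g τ)).const_mul (p g)).const_mul (1 / (T : ℝ))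
  rw [hJ.deriv, hJsurr.deriv, ← mul_assoc, mul_one_div_cancel (by positivity), one_mul]
  exact sum_congr rfl fun g _ => congrArg (p g * ·) <|
    sum_deriv_mul_return_eq_sum_score_mul_rewardToGo π θb g hT ρ P hP1 (hπ1 · · g) (hdiffAt g)
      (hπb · g ·) fun i s => γ ^ (i : ℕ) * if φ s = g then 1 else 0

/-- `J′(θ_b) = T·J_surr′(θ_b)`, where
`J(θ) = Σ_g p(g)·Σ_τ P_θ(τ|g)·Σ_{i=1}^T γ^{i−1}·1[φ(s_i)=g]` and
`J_surr(θ) = (1/T)·Σ_g p(g)·Σ_τ P_{θ_b}(τ|g)·Σ_{t=1}^T log π_θ(a_t|s_t,g)·Σ_{i=t}^T γ^{i−1}·1[φ(s_i)=g]`. -/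
theorem stmt11 {S A G : Type} [Fintype S] [Fintype A] [Fintype G] [DecidableEq G]
    (T : ℕ) (hT : 1 ≤ T) (φ : S → G)
    (γ : ℝ) (hγ0 : 0 < γ) (hγ1 : γ ≤ 1)
    (p : G → ℝ) (hp0 : ∀ g, 0 ≤ p g) (hp1 : ∑ g, p g = 1)
    (ρ : S → ℝ) (hρ0 : ∀ s, 0 ≤ ρ s) (hρ1 : ∑ s, ρ s = 1)
    (P : S → S → A → ℝ) (hP0 : ∀ s' s a, 0 ≤ P s' s a)
    (hP1 : ∀ s a, ∑ s', P s' s a = 1)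
    (π : ℝ → S → G → A → ℝ)
    (hπ1 : ∀ θ s g, ∑ a, π θ s g a = 1)
    (hdiff : ∀ s g a, Differentiable ℝ (fun θ => π θ s g a))
    (θb : ℝ) (hπb : ∀ s g a, 0 < π θb s g a) :
    deriv (fun θ => ∑ g, p g * ∑ τ : (Fin T → S) × (Fin T → A),
        Ptraj T hT ρ P π θ g τ *
          ∑ i : Fin T, γ ^ (i : ℕ) * (if φ (τ.1 i) = g then (1 : ℝ) else 0)) θb
      = (T : ℝ) * deriv (fun θ => (1 / (T : ℝ)) * ∑ g, p g *
          ∑ τ : (Fin T → S) × (Fin T → A), Ptraj T hT ρ P π θb g τ *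
            ∑ t : Fin T, Real.log (π θ (τ.1 t) g (τ.2 t)) *
              ∑ i ∈ Finset.Ici t, γ ^ (i : ℕ) *
                (if φ (τ.1 i) = g then (1 : ℝ) else 0)) θb :=
  stmt11_general T hT φ γ p ρ P hP1 π hπ1 hdiff θb hπb
end

section
/- There exists a real constant K, depending only on p, ρ, P, π_b, γ, T, φ (and not on π), such that for every policy π with π(a|s,g) > 0 and Σ_a π(a|s,g) = 1 for all s, g: log J(π) ≥ (T/C_m)·J_surr(π) − (T/C_m)·Σ_g p(g)·Σ_τ P_b(τ|g)·Σ_{t=1}^T KL(π_b(·|s_t,g) ∥ π(·|s_t,g)) + K. -/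
open Finset

lemma sum_log_le_log_sum {ι : Type*} [Fintype ι] (w z : ι → ℝ)
    (hw : ∀ i, 0 ≤ w i) (hw1 : ∑ i, w i = 1) (hz : ∀ i, 0 < z i) :
    ∑ i, w i * Real.log (z i) ≤ Real.log (∑ i, w i * z i) := by
  have hS : 0 < ∑ i, w i * z i := by
    obtain ⟨i₀, hi₀⟩ : ∃ i, 0 < w i := by
      by_contra h
      push_neg at h
      have : ∑ i, w i ≤ 0 := Finset.sum_nonpos (fun i _ => h i)
      linarith
    exact Finset.sum_pos' (fun i _ => mul_nonneg (hw i) (hz i).le)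
      ⟨i₀, Finset.mem_univ _, mul_pos hi₀ (hz i₀)⟩
  set Sz := ∑ i, w i * z i with hSz
  have key : ∀ i, w i * Real.log (z i) ≤ w i * Real.log Sz + (w i * z i / Sz - w i) := by
    intro i
    rcases eq_or_lt_of_le (hw i) with h | h
    · simp [← h]
    · have hlog : Real.log (z i / Sz) ≤ z i / Sz - 1 :=
        Real.log_le_sub_one_of_pos (div_pos (hz i) hS)
      rw [Real.log_div (hz i).ne' hS.ne'] at hlog
      have h2 := mul_le_mul_of_nonneg_left hlog h.le
      have h3 : w i * (z i / Sz) = w i * z i / Sz := by ring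
      nlinarith
  calc ∑ i, w i * Real.log (z i)
      ≤ ∑ i, (w i * Real.log Sz + (w i * z i / Sz - w i)) :=
        Finset.sum_le_sum fun i _ => key i
    _ = Real.log Sz := by
        rw [Finset.sum_add_distrib, Finset.sum_sub_distrib, ← Finset.sum_mul,
          ← Finset.sum_div, hw1, ← hSz, div_self hS.ne']
        ring

lemma gibbs_nonneg {A : Type*} [Fintype A] (q r : A → ℝ) (hq : ∀ a, 0 < q a)
    (hr : ∀ a, 0 < r a) (hq1 : ∑ a, q a = 1) (hr1 : ∑ a, r a = 1) :
    0 ≤ ∑ a, q a * Real.log (q a / r a) := by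
  have key : ∀ a, q a - r a ≤ q a * Real.log (q a / r a) := by
    intro a
    have hlog : Real.log (r a / q a) ≤ r a / q a - 1 :=
      Real.log_le_sub_one_of_pos (div_pos (hr a) (hq a))
    rw [Real.log_div (hr a).ne' (hq a).ne'] at hlog
    rw [Real.log_div (hq a).ne' (hr a).ne']
    have h1 := mul_le_mul_of_nonneg_left hlog (hq a).le
    have h2 : q a * (r a / q a) = r a := by
      rw [mul_comm]; exact div_mul_cancel₀ _ (hq a).ne'
    nlinarith
  have h := Finset.sum_le_sum (fun a (_ : a ∈ Finset.univ) => key a)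
  rw [Finset.sum_sub_distrib, hq1, hr1] at h
  simpa using h

def updEquiv {ι X : Type*} [DecidableEq ι] (j : ι) : ((ι → X) × X) ≃ ((ι → X) × X) where
  toFun := fun p => (Function.update p.1 j p.2, p.1 j)
  invFun := fun p => (Function.update p.1 j p.2, p.1 j)
  left_inv := by
    intro p
    simp [Function.update_idem, Function.update_eq_self]
  right_inv := by
    intro p
    simp [Function.update_idem, Function.update_eq_self]

lemma sum_out {ι X : Type*} [Fintype ι] [DecidableEq ι] [Fintype X] [Nonempty X]
    (j : ι) (F G : (ι → X) → ℝ)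
    (H : ∀ f : ι → X, ∑ x, F (Function.update f j x) = ∑ x, G (Function.update f j x)) :
    ∑ f, F f = ∑ f, G f := by
  have key : ∀ Φ : (ι → X) → ℝ,
      ∑ f : ι → X, ∑ x : X, Φ (Function.update f j x)
        = (Fintype.card X : ℝ) * ∑ f, Φ f := by
    intro Φ
    calc ∑ f : ι → X, ∑ x : X, Φ (Function.update f j x)
        = ∑ p : (ι → X) × X, Φ (Function.update p.1 j p.2) :=
          (Fintype.sum_prod_type
            (fun p : (ι → X) × X => Φ (Function.update p.1 j p.2))).symm
      _ = ∑ p : (ι → X) × X, Φ ((updEquiv j p).1) :=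
          Finset.sum_congr rfl fun p _ => by simp [updEquiv]
      _ = ∑ p : (ι → X) × X, Φ p.1 :=
          (updEquiv j).sum_comp (fun p : (ι → X) × X => Φ p.1)
      _ = (Fintype.card X : ℝ) * ∑ f, Φ f := by
          rw [Fintype.sum_prod_type]
          simp [Finset.sum_const, nsmul_eq_mul, ← Finset.sum_mul, mul_comm]
  have hc : (Fintype.card X : ℝ) ≠ 0 := by
    exact_mod_cast Fintype.card_ne_zero
  have h1 := key F
  have h2 := key G
  have h3 : ∑ f : ι → X, ∑ x : X, F (Function.update f j x)
      = ∑ f : ι → X, ∑ x : X, G (Function.update f j x) :=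
    Finset.sum_congr rfl fun f _ => H f
  apply mul_left_cancel₀ hc
  rw [← h1, ← h2, h3]



def nxt {T : ℕ} (hT : 0 < T) (k : Fin T) : Fin T := ⟨((k : ℕ) + 1) % T, Nat.mod_lt _ hT⟩

lemma nxt_val {T : ℕ} (hT : 0 < T) (k : Fin T) (h : (k : ℕ) + 1 < T) :
    ((nxt hT k : Fin T) : ℕ) = (k : ℕ) + 1 := Nat.mod_eq_of_lt h

noncomputable def chainI {X : Type*} [Fintype X] {T : ℕ} (hT : 0 < T) (t : Fin T)
    (ν : X → ℝ) (κ : X → X → ℝ) (u : (Fin T → X) → ℝ) (d : X → ℝ)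
    (j : ℕ) (f : Fin T → X) : ℝ :=
  (ν (f ⟨0, hT⟩) * ∏ k : Fin T,
      (if (k : ℕ) + 1 < T ∧ (k : ℕ) + 1 ≤ j then κ (f (nxt hT k)) (f k) else 1))
    * (u f * d (f t))

lemma chain_zero {X : Type*} [Fintype X] {T : ℕ} (hT : 0 < T) (t : Fin T) (ht : 1 ≤ (t : ℕ))
    (ν : X → ℝ) (κ : X → X → ℝ) (hκ : ∀ x, ∑ y, κ y x = 1)
    (u : (Fin T → X) → ℝ)
    (hu : ∀ f f' : Fin T → X, (∀ k : Fin T, (k : ℕ) < (t : ℕ) → f k = f' k) → u f = u f')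
    (d : X → ℝ) (hd : ∀ x, ∑ y, κ y x * d y = 0) :
    ∑ f : Fin T → X,
      (ν (f ⟨0, hT⟩) * ∏ k : Fin T,
        (if (k : ℕ) + 1 < T then κ (f (nxt hT k)) (f k) else 1))
        * (u f * d (f t)) = 0 := by
  rcases isEmpty_or_nonempty X with hX | hX
  · have : IsEmpty (Fin T → X) := ⟨fun f => hX.false (f ⟨0, hT⟩)⟩
    rw [Finset.univ_eq_empty, Finset.sum_empty]
  have htT : (t : ℕ) < T := t.isLt
  have claim : ∀ j, (t : ℕ) ≤ j → ∑ f, chainI hT t ν κ u d j f = 0 := by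
    intro j hj
    induction j, hj using Nat.le_induction with
    | base =>
      have h0 : (0 : ℝ) = ∑ _f : Fin T → X, (0 : ℝ) := by simp
      rw [h0]
      apply sum_out t (chainI hT t ν κ u d (t : ℕ)) (fun _ => 0)
      intro f
      have hk0T : (t : ℕ) - 1 < T := by omega
      set k₀ : Fin T := ⟨(t : ℕ) - 1, hk0T⟩ with hk₀
      have hk₀v : (k₀ : ℕ) = (t : ℕ) - 1 := rfl
      have h0v : ((⟨0, hT⟩ : Fin T) : ℕ) = 0 := rfl
      have hnxtk₀ : nxt hT k₀ = t := by
        apply Fin.ext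
        show ((t : ℕ) - 1 + 1) % T = (t : ℕ)
        rw [show (t : ℕ) - 1 + 1 = (t : ℕ) by omega]
        exact Nat.mod_eq_of_lt htT
      have hk₀t : k₀ ≠ t := Fin.ne_of_val_ne (by omega)
      have e1 : ∀ x : X, Function.update f t x ⟨0, hT⟩ = f ⟨0, hT⟩ :=
        fun x => Function.update_of_ne (Fin.ne_of_val_ne (by omega)) _ _
      have e2 : ∀ x : X, u (Function.update f t x) = u f :=
        fun x => hu _ _ (fun k hk => Function.update_of_ne (Fin.ne_of_val_ne (by omega)) _ _)
      have hsplit : ∀ x : X,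
          (∏ k : Fin T, (if (k : ℕ) + 1 < T ∧ (k : ℕ) + 1 ≤ (t : ℕ) then
            κ ((Function.update f t x) (nxt hT k)) ((Function.update f t x) k) else 1))
          = κ x (f k₀) * ∏ k ∈ Finset.univ.erase k₀,
              (if (k : ℕ) + 1 < T ∧ (k : ℕ) + 1 ≤ (t : ℕ) then κ (f (nxt hT k)) (f k) else 1) := by
        intro x
        rw [← Finset.mul_prod_erase Finset.univ _ (Finset.mem_univ k₀)]
        congr 1
        · rw [if_pos ⟨by omega, by omega⟩, hnxtk₀, Function.update_self,
            Function.update_of_ne hk₀t]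
        · apply Finset.prod_congr rfl
          intro k hk
          have hkk₀ : (k : ℕ) ≠ (k₀ : ℕ) := fun h => (Finset.mem_erase.mp hk).1 (Fin.ext h)
          by_cases hc : (k : ℕ) + 1 < T ∧ (k : ℕ) + 1 ≤ (t : ℕ)
          · rw [if_pos hc, if_pos hc,
              Function.update_of_ne (Fin.ne_of_val_ne (by rw [nxt_val hT k hc.1]; omega)),
              Function.update_of_ne (Fin.ne_of_val_ne (by omega))]
          · rw [if_neg hc, if_neg hc]
      calc ∑ x : X, chainI hT t ν κ u d (t : ℕ) (Function.update f t x)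
          = ∑ x : X, (ν (f ⟨0, hT⟩)
              * (∏ k ∈ Finset.univ.erase k₀,
                  (if (k : ℕ) + 1 < T ∧ (k : ℕ) + 1 ≤ (t : ℕ) then κ (f (nxt hT k)) (f k) else 1))
              * u f) * (κ x (f k₀) * d x) := by
            apply Finset.sum_congr rfl
            intro x _
            rw [chainI, e1 x, e2 x, hsplit x, Function.update_self]
            ring
        _ = (ν (f ⟨0, hT⟩)
              * (∏ k ∈ Finset.univ.erase k₀,
                  (if (k : ℕ) + 1 < T ∧ (k : ℕ) + 1 ≤ (t : ℕ) then κ (f (nxt hT k)) (f k) else 1))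
              * u f) * ∑ x : X, κ x (f k₀) * d x := by
            rw [Finset.mul_sum]
        _ = ∑ _x : X, (0 : ℝ) := by rw [hd (f k₀), mul_zero, Finset.sum_const, smul_zero]
    | succ j hj ih =>
      by_cases hj1 : j + 1 < T
      · have hjT : j < T := by omega
        set c : Fin T := ⟨j + 1, hj1⟩ with hc
        set k₁ : Fin T := ⟨j, hjT⟩ with hk₁
        have hcv : (c : ℕ) = j + 1 := rfl
        have hk₁v : (k₁ : ℕ) = j := rfl
        have h0v : ((⟨0, hT⟩ : Fin T) : ℕ) = 0 := rfl
        have hnxtk₁ : nxt hT k₁ = c := by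
          apply Fin.ext
          show (j + 1) % T = j + 1
          exact Nat.mod_eq_of_lt hj1
        have hk₁c : k₁ ≠ c := Fin.ne_of_val_ne (by omega)
        have hG : ∑ f : Fin T → X, (Fintype.card X : ℝ)⁻¹ * chainI hT t ν κ u d j f = 0 := by
          rw [← Finset.mul_sum, ih, mul_zero]
        rw [← hG]
        apply sum_out c _ _
        intro f
        have e1 : ∀ x : X, Function.update f c x ⟨0, hT⟩ = f ⟨0, hT⟩ :=
          fun x => Function.update_of_ne (Fin.ne_of_val_ne (by omega)) _ _
        have e2 : ∀ x : X, u (Function.update f c x) = u f :=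
          fun x => hu _ _ (fun k hk => Function.update_of_ne (Fin.ne_of_val_ne (by omega)) _ _)
        have e3 : ∀ x : X, Function.update f c x t = f t :=
          fun x => Function.update_of_ne (Fin.ne_of_val_ne (by omega)) _ _
        have hsplit : ∀ x : X,
            (∏ k : Fin T, (if (k : ℕ) + 1 < T ∧ (k : ℕ) + 1 ≤ j + 1 then
              κ ((Function.update f c x) (nxt hT k)) ((Function.update f c x) k) else 1))
            = κ x (f k₁) * ∏ k ∈ Finset.univ.erase k₁,
                (if (k : ℕ) + 1 < T ∧ (k : ℕ) + 1 ≤ j then κ (f (nxt hT k)) (f k) else 1) := by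
          intro x
          rw [← Finset.mul_prod_erase Finset.univ _ (Finset.mem_univ k₁)]
          congr 1
          · rw [if_pos ⟨by omega, by omega⟩, hnxtk₁, Function.update_self,
              Function.update_of_ne hk₁c]
          · apply Finset.prod_congr rfl
            intro k hk
            have hkk₁ : (k : ℕ) ≠ (k₁ : ℕ) := fun h => (Finset.mem_erase.mp hk).1 (Fin.ext h)
            by_cases hcc : (k : ℕ) + 1 < T ∧ (k : ℕ) + 1 ≤ j
            · rw [if_pos ⟨hcc.1, by omega⟩, if_pos hcc,
                Function.update_of_ne (Fin.ne_of_val_ne (by rw [nxt_val hT k hcc.1]; omega)),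
                Function.update_of_ne (Fin.ne_of_val_ne (by omega))]
            · rw [if_neg (by omega), if_neg hcc]
        have hIj_univ : (∏ k : Fin T,
              (if (k : ℕ) + 1 < T ∧ (k : ℕ) + 1 ≤ j then κ (f (nxt hT k)) (f k) else 1))
            = ∏ k ∈ Finset.univ.erase k₁,
                (if (k : ℕ) + 1 < T ∧ (k : ℕ) + 1 ≤ j then κ (f (nxt hT k)) (f k) else 1) := by
          rw [← Finset.mul_prod_erase Finset.univ _ (Finset.mem_univ k₁),
            if_neg (by omega), one_mul]
        have hcard : (Fintype.card X : ℝ) ≠ 0 := by exact_mod_cast Fintype.card_ne_zero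
        calc ∑ x : X, chainI hT t ν κ u d (j + 1) (Function.update f c x)
            = ∑ x : X, (ν (f ⟨0, hT⟩)
                * (∏ k ∈ Finset.univ.erase k₁,
                    (if (k : ℕ) + 1 < T ∧ (k : ℕ) + 1 ≤ j then κ (f (nxt hT k)) (f k) else 1))
                * (u f * d (f t))) * κ x (f k₁) := by
              apply Finset.sum_congr rfl
              intro x _
              rw [chainI, e1 x, e2 x, e3 x, hsplit x]
              ring
          _ = (ν (f ⟨0, hT⟩)
                * (∏ k ∈ Finset.univ.erase k₁,
                    (if (k : ℕ) + 1 < T ∧ (k : ℕ) + 1 ≤ j then κ (f (nxt hT k)) (f k) else 1))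
                * (u f * d (f t))) * ∑ x : X, κ x (f k₁) := by
              rw [Finset.mul_sum]
          _ = chainI hT t ν κ u d j f := by
              rw [hκ (f k₁), mul_one, chainI, hIj_univ]
          _ = ∑ x : X, (Fintype.card X : ℝ)⁻¹ * chainI hT t ν κ u d j (Function.update f c x) := by
              have : ∀ x : X, chainI hT t ν κ u d j (Function.update f c x)
                  = chainI hT t ν κ u d j f := by
                intro x
                rw [chainI, chainI, e1 x, e2 x, e3 x]
                congr 2
                apply Finset.prod_congr rfl
                intro k _
                by_cases hcc : (k : ℕ) + 1 < T ∧ (k : ℕ) + 1 ≤ j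
                · rw [if_pos hcc, if_pos hcc,
                    Function.update_of_ne (Fin.ne_of_val_ne (by rw [nxt_val hT k hcc.1]; omega)),
                    Function.update_of_ne (Fin.ne_of_val_ne (by omega))]
                · rw [if_neg hcc, if_neg hcc]
              simp only [this]
              rw [Finset.sum_const, nsmul_eq_mul, ← mul_assoc, Finset.card_univ,
                mul_inv_cancel₀ hcard, one_mul]
      · have : ∀ f : Fin T → X, chainI hT t ν κ u d (j + 1) f = chainI hT t ν κ u d j f := by
          intro f
          rw [chainI, chainI]
          congr 2
          apply Finset.prod_congr rfl
          intro k _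
          have : ((k : ℕ) + 1 < T ∧ (k : ℕ) + 1 ≤ j + 1) ↔ ((k : ℕ) + 1 < T ∧ (k : ℕ) + 1 ≤ j) := by
            omega
          rw [if_congr this rfl rfl]
        rw [Finset.sum_congr rfl (fun f _ => this f)]
        exact ih
  have hfin := claim T (le_of_lt htT)
  rw [← hfin]
  apply Finset.sum_congr rfl
  intro f _
  rw [chainI]
  congr 2
  apply Finset.prod_congr rfl
  intro k _
  have : ((k : ℕ) + 1 < T) ↔ ((k : ℕ) + 1 < T ∧ (k : ℕ) + 1 ≤ T) := by omega
  rw [if_congr this rfl rfl]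



lemma prod_shift {T : ℕ} (hT : 0 < T) (h : Fin T → ℝ) :
    ∏ k : Fin T, h k
      = h ⟨0, hT⟩ * ∏ k : Fin T, (if (k : ℕ) + 1 < T then h (nxt hT k) else 1) := by
  have h1 : ∏ k : Fin T, (if (k : ℕ) + 1 < T then h (nxt hT k) else 1)
      = ∏ k ∈ Finset.univ.filter (fun k : Fin T => (k : ℕ) + 1 < T), h (nxt hT k) :=
    (Finset.prod_filter _ _).symm
  have h2 : ∏ k ∈ Finset.univ.filter (fun k : Fin T => (k : ℕ) + 1 < T), h (nxt hT k)
      = ∏ k ∈ Finset.univ.erase ⟨0, hT⟩, h k := by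
    have h0v : ((⟨0, hT⟩ : Fin T) : ℕ) = 0 := rfl
    apply Finset.prod_nbij' (fun k => nxt hT k)
      (fun k : Fin T => ⟨(k : ℕ) - 1, by omega⟩)
    · intro a ha
      have hlt : (a : ℕ) + 1 < T := (Finset.mem_filter.mp ha).2
      apply Finset.mem_erase.mpr
      constructor
      · exact Fin.ne_of_val_ne (by rw [nxt_val hT a hlt, h0v]; omega)
      · exact Finset.mem_univ _
    · intro b hb
      have hb0 : (b : ℕ) ≠ 0 := by
        intro hh
        exact (Finset.mem_erase.mp hb).1 (Fin.ext hh)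
      apply Finset.mem_filter.mpr
      refine ⟨Finset.mem_univ _, ?_⟩
      show ((b : ℕ) - 1) + 1 < T
      have := b.isLt
      omega
    · intro a ha
      have hlt : (a : ℕ) + 1 < T := (Finset.mem_filter.mp ha).2
      apply Fin.ext
      show ((nxt hT a : Fin T) : ℕ) - 1 = (a : ℕ)
      rw [nxt_val hT a hlt]
      omega
    · intro b hb
      have hb0 : (b : ℕ) ≠ 0 := by
        intro hh
        exact (Finset.mem_erase.mp hb).1 (Fin.ext hh)
      have := b.isLt
      apply Fin.ext
      show ((b : ℕ) - 1 + 1) % T = (b : ℕ)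
      rw [show (b : ℕ) - 1 + 1 = (b : ℕ) by omega]
      exact Nat.mod_eq_of_lt b.isLt
    · intro a _
      rfl
  rw [h1, h2, ← Finset.mul_prod_erase Finset.univ h (Finset.mem_univ ⟨0, hT⟩)]

/-- Probability of the trajectory `τ = (s_1,a_1,…,s_T,a_T)` given goal `g` under the
policy `π`: `P_π(τ|g) = ρ(s_1)·Π_{t=1}^T π(a_t|s_t,g)·Π_{t=1}^{T−1} P(s_{t+1}|s_t,a_t)`
(0-based indexing; the transition factor is 1 at the last step). -/
noncomputable def PtrajPol {S A G : Type} [Fintype S] [Fintype A]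
    (T : ℕ) (hT : 1 ≤ T) (ρ : S → ℝ) (P : S → S → A → ℝ)
    (π : S → G → A → ℝ) (g : G) (τ : (Fin T → S) × (Fin T → A)) : ℝ :=
  ρ (τ.1 ⟨0, hT⟩) * (∏ t : Fin T, π (τ.1 t) g (τ.2 t)) *
    ∏ t : Fin T,
      (if h : (t : ℕ) + 1 < T then P (τ.1 ⟨(t : ℕ) + 1, h⟩) (τ.1 t) (τ.2 t) else 1)

/-- The discounted return `R(τ,g) = Σ_{i=1}^T γ^{i−1}·1[φ(s_i)=g]`
(0-based indexing, so `γ^{i−1}` is `γ^(i:ℕ)`). -/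
noncomputable def RetG {S A G : Type} [DecidableEq G] (T : ℕ) (φ : S → G) (γ : ℝ)
    (τ : (Fin T → S) × (Fin T → A)) (g : G) : ℝ :=
  ∑ i : Fin T, γ ^ (i : ℕ) * (if φ (τ.1 i) = g then (1 : ℝ) else 0)

/-- The goal-conditioned objective `J(π) = Σ_g p(g)·Σ_τ P_π(τ|g)·R(τ,g)`. -/
noncomputable def Jobj {S A G : Type} [Fintype S] [Fintype A] [Fintype G] [DecidableEq G]
    (T : ℕ) (hT : 1 ≤ T) (φ : S → G) (γ : ℝ) (p : G → ℝ)
    (ρ : S → ℝ) (P : S → S → A → ℝ) (π : S → G → A → ℝ) : ℝ :=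
  ∑ g, p g * ∑ τ : (Fin T → S) × (Fin T → A),
    PtrajPol T hT ρ P π g τ * RetG T φ γ τ g

/-- The surrogate objective
`J_surr(π) = (1/T)·Σ_g p(g)·Σ_τ P_b(τ|g)·Σ_{t=1}^T log π(a_t|s_t,g)·Σ_{i=t}^T γ^{i−1}·1[φ(s_i)=g]`. -/
noncomputable def JsurrB {S A G : Type} [Fintype S] [Fintype A] [Fintype G] [DecidableEq G]
    (T : ℕ) (hT : 1 ≤ T) (φ : S → G) (γ : ℝ) (p : G → ℝ)
    (ρ : S → ℝ) (P : S → S → A → ℝ) (πb π : S → G → A → ℝ) : ℝ :=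
  (1 / (T : ℝ)) * ∑ g, p g * ∑ τ : (Fin T → S) × (Fin T → A),
    PtrajPol T hT ρ P πb g τ *
      ∑ t : Fin T, Real.log (π (τ.1 t) g (τ.2 t)) *
        ∑ i ∈ Finset.Ici t, γ ^ (i : ℕ) * (if φ (τ.1 i) = g then (1 : ℝ) else 0)

/-- The expected cumulative KL-divergence penalty
`Σ_g p(g)·Σ_τ P_b(τ|g)·Σ_{t=1}^T KL(π_b(·|s_t,g) ∥ π(·|s_t,g))`, with
`KL(π_b(·|s,g) ∥ π(·|s,g)) = Σ_a π_b(a|s,g)·log(π_b(a|s,g)/π(a|s,g))`. -/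
noncomputable def KLsum {S A G : Type} [Fintype S] [Fintype A] [Fintype G]
    (T : ℕ) (hT : 1 ≤ T) (p : G → ℝ)
    (ρ : S → ℝ) (P : S → S → A → ℝ) (πb π : S → G → A → ℝ) : ℝ :=
  ∑ g, p g * ∑ τ : (Fin T → S) × (Fin T → A),
    PtrajPol T hT ρ P πb g τ *
      ∑ t : Fin T, ∑ a, πb (τ.1 t) g a *
        Real.log (πb (τ.1 t) g a / π (τ.1 t) g a)

lemma Pb_eq {S A G : Type} [Fintype S] [Fintype A] (T : ℕ) (hT : 1 ≤ T)
    (ρ : S → ℝ) (P : S → S → A → ℝ) (πb : S → G → A → ℝ) (g : G)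
    (f : Fin T → S × A) :
    PtrajPol T hT ρ P πb g (fun k => (f k).1, fun k => (f k).2)
      = (ρ (f ⟨0, hT⟩).1 * πb (f ⟨0, hT⟩).1 g (f ⟨0, hT⟩).2) *
        ∏ k : Fin T, (if (k : ℕ) + 1 < T then
          P (f (nxt hT k)).1 (f k).1 (f k).2 * πb (f (nxt hT k)).1 g (f (nxt hT k)).2
          else 1) := by
  unfold PtrajPol
  simp only
  rw [prod_shift hT (fun k => πb (f k).1 g (f k).2)]
  have hd : (∏ k : Fin T, if h : (k : ℕ) + 1 < T then
        P (f ⟨(k : ℕ) + 1, h⟩).1 (f k).1 (f k).2 else 1)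
      = ∏ k : Fin T, (if (k : ℕ) + 1 < T then P (f (nxt hT k)).1 (f k).1 (f k).2 else 1) := by
    apply Finset.prod_congr rfl
    intro k _
    by_cases hk : (k : ℕ) + 1 < T
    · rw [dif_pos hk, if_pos hk]
      have : (⟨(k : ℕ) + 1, hk⟩ : Fin T) = nxt hT k := Fin.ext (by rw [nxt_val hT k hk])
      rw [this]
    · rw [dif_neg hk, if_neg hk]
  rw [hd]
  have hsplit2 : ∏ k : Fin T, (if (k : ℕ) + 1 < T then
        P (f (nxt hT k)).1 (f k).1 (f k).2 * πb (f (nxt hT k)).1 g (f (nxt hT k)).2 else 1)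
      = (∏ k : Fin T, if (k : ℕ) + 1 < T then P (f (nxt hT k)).1 (f k).1 (f k).2 else 1)
        * (∏ k : Fin T, if (k : ℕ) + 1 < T then πb (f (nxt hT k)).1 g (f (nxt hT k)).2 else 1) := by
    rw [← Finset.prod_mul_distrib]
    apply Finset.prod_congr rfl
    intro k _
    by_cases hk : (k : ℕ) + 1 < T
    · rw [if_pos hk, if_pos hk, if_pos hk]
    · rw [if_neg hk, if_neg hk, if_neg hk, mul_one]
  rw [hsplit2]
  ring

lemma tower {S A G : Type} [Fintype S] [Fintype A] (T : ℕ) (hT : 1 ≤ T)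
    (ρ : S → ℝ) (P : S → S → A → ℝ) (hP1 : ∀ s a, ∑ s', P s' s a = 1)
    (πb : S → G → A → ℝ) (hπb1 : ∀ s g, ∑ a, πb s g a = 1) (g : G)
    (t : Fin T) (ht : 1 ≤ (t : ℕ))
    (u : (Fin T → S) → ℝ)
    (hu : ∀ sf sf' : Fin T → S, (∀ k : Fin T, (k : ℕ) < (t : ℕ) → sf k = sf' k) → u sf = u sf')
    (D : S → A → ℝ) (hD : ∀ s, ∑ a, πb s g a * D s a = 0) :
    ∑ τ : (Fin T → S) × (Fin T → A),
      PtrajPol T hT ρ P πb g τ * (u τ.1 * D (τ.1 t) (τ.2 t)) = 0 := by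
  rw [← Equiv.sum_comp (Equiv.arrowProdEquivProdArrow (Fin T) (fun _ => S) (fun _ => A))
    (fun τ : (Fin T → S) × (Fin T → A) =>
      PtrajPol T hT ρ P πb g τ * (u τ.1 * D (τ.1 t) (τ.2 t)))]
  have key := chain_zero (X := S × A) hT t ht
    (fun x => ρ x.1 * πb x.1 g x.2)
    (fun y x => P y.1 x.1 x.2 * πb y.1 g y.2)
    (by
      intro x
      rw [Fintype.sum_prod_type]
      have : ∀ s' : S, ∑ a' : A, P s' x.1 x.2 * πb s' g a' = P s' x.1 x.2 := by
        intro s'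
        rw [← Finset.mul_sum, hπb1, mul_one]
      rw [Finset.sum_congr rfl (fun s' _ => this s'), hP1])
    (fun f => u (fun k => (f k).1))
    (by
      intro f f' hff
      exact hu _ _ (fun k hk => by rw [hff k hk]))
    (fun x => D x.1 x.2)
    (by
      intro x
      rw [Fintype.sum_prod_type]
      have : ∀ s' : S, ∑ a' : A, (P s' x.1 x.2 * πb s' g a') * D s' a'
          = P s' x.1 x.2 * ∑ a' : A, πb s' g a' * D s' a' := by
        intro s'
        rw [Finset.mul_sum]
        exact Finset.sum_congr rfl (fun a' _ => by ring)
      rw [Finset.sum_congr rfl (fun s' _ => this s')]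
      simp [hD])
  rw [← key]
  apply Finset.sum_congr rfl
  intro f _
  have hEf : (Equiv.arrowProdEquivProdArrow (Fin T) (fun _ => S) (fun _ => A)) f
      = (fun k => (f k).1, fun k => (f k).2) := rfl
  rw [hEf, Pb_eq T hT ρ P πb g f]

lemma div_mono_nonpos {x cm c : ℝ} (hx : x ≤ 0) (h0 : 0 < cm) (h : cm ≤ c) :
    x / cm ≤ x / c := by
  rw [div_eq_mul_one_div x cm, div_eq_mul_one_div x c]
  exact mul_le_mul_of_nonpos_left (one_div_le_one_div_of_le h0 h) hx

/-- there is a constant `K` depending only on `p, ρ, P, π_b, γ, T, φ`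
(not on `π`) such that for every positive normalized policy `π`, with
`C(g) = Σ_τ P_b(τ|g)·R(τ,g)` and `C_m = min_g C(g)`:
`log J(π) ≥ (T/C_m)·J_surr(π) − (T/C_m)·Σ_g p(g)·Σ_τ P_b(τ|g)·Σ_t KL(π_b(·|s_t,g) ∥ π(·|s_t,g)) + K`. -/
theorem stmt13 {S A G : Type} [Fintype S] [Fintype A] [Fintype G] [Nonempty G]
    [DecidableEq G]
    (T : ℕ) (hT : 1 ≤ T) (φ : S → G)
    (γ : ℝ) (hγ0 : 0 < γ) (hγ1 : γ ≤ 1)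
    (p : G → ℝ) (hp0 : ∀ g, 0 < p g) (hp1 : ∑ g, p g = 1)
    (ρ : S → ℝ) (hρ0 : ∀ s, 0 ≤ ρ s) (hρ1 : ∑ s, ρ s = 1)
    (P : S → S → A → ℝ) (hP0 : ∀ s' s a, 0 ≤ P s' s a)
    (hP1 : ∀ s a, ∑ s', P s' s a = 1)
    (πb : S → G → A → ℝ) (hπb0 : ∀ s g a, 0 < πb s g a)
    (hπb1 : ∀ s g, ∑ a, πb s g a = 1)
    (hC : ∀ g, 0 < ∑ τ : (Fin T → S) × (Fin T → A),
        PtrajPol T hT ρ P πb g τ * RetG T φ γ τ g) :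
    ∃ K : ℝ, ∀ π : S → G → A → ℝ,
      (∀ s g a, 0 < π s g a) → (∀ s g, ∑ a, π s g a = 1) →
      Real.log (Jobj T hT φ γ p ρ P π) ≥
        ((T : ℝ) / Finset.univ.inf' Finset.univ_nonempty
            (fun g => ∑ τ : (Fin T → S) × (Fin T → A),
              PtrajPol T hT ρ P πb g τ * RetG T φ γ τ g)) *
          JsurrB T hT φ γ p ρ P πb π -
        ((T : ℝ) / Finset.univ.inf' Finset.univ_nonempty
            (fun g => ∑ τ : (Fin T → S) × (Fin T → A),
              PtrajPol T hT ρ P πb g τ * RetG T φ γ τ g)) *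
          KLsum T hT p ρ P πb π + K := by
  classical
  have hT0 : 0 < T := hT
  have hTne : (T : ℝ) ≠ 0 := by positivity
  set Pb : G → ((Fin T → S) × (Fin T → A)) → ℝ :=
    fun g τ => PtrajPol T hT ρ P πb g τ with hPbdef
  set R : ((Fin T → S) × (Fin T → A)) → G → ℝ :=
    fun τ g => RetG T φ γ τ g with hRdef
  set C : G → ℝ := fun g => ∑ τ : (Fin T → S) × (Fin T → A), Pb g τ * R τ g with hCdef
  set Cm : ℝ := Finset.univ.inf' Finset.univ_nonempty C with hCmdef
  have hC' : ∀ g, 0 < C g := hC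
  have hCm0 : 0 < Cm := by
    rw [hCmdef]
    exact (Finset.lt_inf'_iff _).mpr (fun g _ => hC' g)
  have hCmle : ∀ g, Cm ≤ C g := fun g => Finset.inf'_le _ (Finset.mem_univ g)
  set w : G → Fin T → (Fin T → S) → ℝ :=
    fun g t sf => ∑ i ∈ Finset.Ici t, γ ^ (i : ℕ) * (if φ (sf i) = g then (1 : ℝ) else 0)
    with hwdef
  set uu : G → Fin T → (Fin T → S) → ℝ :=
    fun g t sf => ∑ i ∈ Finset.Iio t, γ ^ (i : ℕ) * (if φ (sf i) = g then (1 : ℝ) else 0)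
    with huudef
  set E : G → ℝ := fun g => ∑ τ : (Fin T → S) × (Fin T → A),
    Pb g τ * ∑ t : Fin T, Real.log (πb (τ.1 t) g (τ.2 t)) * w g t τ.1 with hEdef
  have hPb0 : ∀ g τ, 0 ≤ Pb g τ := by
    intro g τ
    rw [hPbdef]
    unfold PtrajPol
    apply mul_nonneg (mul_nonneg (hρ0 _) ?_) ?_
    · exact Finset.prod_nonneg fun t _ => (hπb0 _ _ _).le
    · apply Finset.prod_nonneg
      intro t _
      by_cases h : (t : ℕ) + 1 < T
      · rw [dif_pos h]; exact hP0 _ _ _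
      · rw [dif_neg h]; exact zero_le_one
  have hR0 : ∀ τ g, 0 ≤ R τ g := by
    intro τ g
    rw [hRdef]
    unfold RetG
    apply Finset.sum_nonneg
    intro i _
    apply mul_nonneg (pow_nonneg hγ0.le _)
    split <;> norm_num
  have hw0 : ∀ g t sf, 0 ≤ w g t sf := by
    intro g t sf
    rw [hwdef]
    apply Finset.sum_nonneg
    intro i _
    apply mul_nonneg (pow_nonneg hγ0.le _)
    split <;> norm_num
  have huu0 : ∀ g t sf, 0 ≤ uu g t sf := by
    intro g t sf
    rw [huudef]
    apply Finset.sum_nonneg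
    intro i _
    apply mul_nonneg (pow_nonneg hγ0.le _)
    split <;> norm_num
  have huuT : ∀ g t sf, uu g t sf ≤ (T : ℝ) := by
    intro g t sf
    rw [huudef]
    simp only
    calc ∑ i ∈ Finset.Iio t, γ ^ (i : ℕ) * (if φ (sf i) = g then (1 : ℝ) else 0)
        ≤ ∑ _i ∈ Finset.Iio t, (1 : ℝ) := by
          apply Finset.sum_le_sum
          intro i _
          have h1 : γ ^ (i : ℕ) ≤ 1 := pow_le_one₀ hγ0.le hγ1
          have h2 : (if φ (sf i) = g then (1 : ℝ) else 0) ≤ 1 := by split <;> norm_num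
          have h3 : (0 : ℝ) ≤ (if φ (sf i) = g then (1 : ℝ) else 0) := by split <;> norm_num
          nlinarith [pow_nonneg hγ0.le (i : ℕ)]
      _ = ((Finset.Iio t).card : ℝ) := by rw [Finset.sum_const, nsmul_eq_mul, mul_one]
      _ ≤ (T : ℝ) := by
          have h := Finset.card_le_univ (Finset.Iio t)
          simp only [Finset.card_univ, Fintype.card_fin] at h
          exact_mod_cast h
  refine ⟨∑ g, p g * (Real.log (C g) - E g / C g), ?_⟩
  intro π hπ0 hπ1
  have hπle1 : ∀ s g a, π s g a ≤ 1 := by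
    intro s g a
    have h := Finset.single_le_sum (f := fun a => π s g a)
      (fun a _ => (hπ0 s g a).le) (Finset.mem_univ a)
    rw [hπ1 s g] at h
    exact h
  have hlogπ0 : ∀ s g a, Real.log (π s g a) ≤ 0 :=
    fun s g a => Real.log_nonpos (hπ0 _ _ _).le (hπle1 s g a)
  set KL : G → S → ℝ := fun g s => ∑ a, πb s g a * Real.log (πb s g a / π s g a) with hKLdef
  have hKL0 : ∀ g s, 0 ≤ KL g s := by
    intro g s
    rw [hKLdef]
    exact gibbs_nonneg (fun a => πb s g a) (fun a => π s g a)
      (fun a => hπb0 s g a) (fun a => hπ0 s g a) (hπb1 s g) (hπ1 s g)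
  set S1 : G → ℝ := fun g => ∑ τ : (Fin T → S) × (Fin T → A),
    Pb g τ * ∑ t : Fin T, Real.log (π (τ.1 t) g (τ.2 t)) * w g t τ.1 with hS1def
  set S2 : G → ℝ := fun g => ∑ τ : (Fin T → S) × (Fin T → A),
    Pb g τ * ∑ t : Fin T, KL g (τ.1 t) with hS2def
  set L : G → ((Fin T → S) × (Fin T → A)) → ℝ :=
    fun g τ => ∏ t : Fin T, π (τ.1 t) g (τ.2 t) / πb (τ.1 t) g (τ.2 t) with hLdef
  set X : G → ℝ := fun g => ∑ τ : (Fin T → S) × (Fin T → A),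
    PtrajPol T hT ρ P π g τ * R τ g with hXdef
  have hJs : JsurrB T hT φ γ p ρ P πb π = (1 / (T : ℝ)) * ∑ g, p g * S1 g := by
    rw [JsurrB, hS1def, hwdef, hPbdef]
  have hKs : KLsum T hT p ρ P πb π = ∑ g, p g * S2 g := by
    rw [KLsum, hS2def, hKLdef, hPbdef]
  have hJobj : Jobj T hT φ γ p ρ P π = ∑ g, p g * X g := by
    rw [Jobj, hXdef, hRdef]
  have hL0 : ∀ g τ, 0 < L g τ := by
    intro g τ
    rw [hLdef]
    exact Finset.prod_pos fun t _ => div_pos (hπ0 _ _ _) (hπb0 _ _ _)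
  have hPp : ∀ g τ, PtrajPol T hT ρ P π g τ = Pb g τ * L g τ := by
    intro g τ
    rw [hPbdef, hLdef]
    unfold PtrajPol
    have hprod : ∏ t : Fin T, π (τ.1 t) g (τ.2 t)
        = (∏ t : Fin T, πb (τ.1 t) g (τ.2 t))
          * ∏ t : Fin T, π (τ.1 t) g (τ.2 t) / πb (τ.1 t) g (τ.2 t) := by
      rw [← Finset.prod_mul_distrib]
      apply Finset.prod_congr rfl
      intro t _
      rw [mul_comm, div_mul_cancel₀ _ (hπb0 _ _ _).ne']
    rw [hprod]
    ring
  have hlogL : ∀ g τ, Real.log (L g τ)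
      = ∑ t : Fin T, (Real.log (π (τ.1 t) g (τ.2 t)) - Real.log (πb (τ.1 t) g (τ.2 t))) := by
    intro g τ
    rw [hLdef]
    simp only
    rw [Real.log_prod (fun t _ => (div_pos (hπ0 _ _ _) (hπb0 _ _ _)).ne')]
    exact Finset.sum_congr rfl fun t _ => Real.log_div (hπ0 _ _ _).ne' (hπb0 _ _ _).ne'
  have hX0 : ∀ g, 0 < X g := by
    intro g
    obtain ⟨τ₀, _, hτ₀⟩ : ∃ τ ∈ Finset.univ, 0 < Pb g τ * R τ g := by
      by_contra h
      push_neg at h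
      have : C g ≤ 0 := by
        rw [hCdef]
        exact Finset.sum_nonpos fun τ _ => h τ (Finset.mem_univ τ)
      linarith [hC' g]
    rw [hXdef]
    simp only
    apply Finset.sum_pos'
    · intro τ _
      rw [hPp g τ]
      exact mul_nonneg (mul_nonneg (hPb0 g τ) (hL0 g τ).le) (hR0 τ g)
    · refine ⟨τ₀, Finset.mem_univ _, ?_⟩
      rw [hPp g τ₀]
      nlinarith [mul_pos hτ₀ (hL0 g τ₀)]
  -- the tower equality
  have c5 : ∀ (g : G) (t : Fin T),
      ∑ τ : (Fin T → S) × (Fin T → A),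
        Pb g τ * (uu g t τ.1 * (Real.log (π (τ.1 t) g (τ.2 t)) - Real.log (πb (τ.1 t) g (τ.2 t))))
      = ∑ τ : (Fin T → S) × (Fin T → A),
        Pb g τ * (uu g t τ.1 * (-(KL g (τ.1 t)))) := by
    intro g t
    rcases Nat.eq_zero_or_pos (t : ℕ) with ht0 | ht1
    · have huu_zero : ∀ sf : Fin T → S, uu g t sf = 0 := by
        intro sf
        rw [huudef]
        simp only
        have : Finset.Iio t = (∅ : Finset (Fin T)) := by
          ext i
          simp only [Finset.mem_Iio, Finset.notMem_empty, iff_false]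
          intro hlt
          rw [Fin.lt_def] at hlt
          omega
        rw [this, Finset.sum_empty]
      simp only [huu_zero, zero_mul, mul_zero]
    · rw [← sub_eq_zero, ← Finset.sum_sub_distrib]
      have hpt : ∀ τ : (Fin T → S) × (Fin T → A),
          Pb g τ * (uu g t τ.1 * (Real.log (π (τ.1 t) g (τ.2 t)) - Real.log (πb (τ.1 t) g (τ.2 t))))
            - Pb g τ * (uu g t τ.1 * (-(KL g (τ.1 t))))
          = PtrajPol T hT ρ P πb g τ * (uu g t τ.1 *
              (Real.log (π (τ.1 t) g (τ.2 t)) - Real.log (πb (τ.1 t) g (τ.2 t)) + KL g (τ.1 t))) := by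
        intro τ
        rw [hPbdef]
        ring
      rw [Finset.sum_congr rfl (fun τ _ => hpt τ)]
      have hu' : ∀ sf sf' : Fin T → S,
          (∀ k : Fin T, (k : ℕ) < (t : ℕ) → sf k = sf' k) → uu g t sf = uu g t sf' := by
        intro sf sf' hss
        rw [huudef]
        simp only
        apply Finset.sum_congr rfl
        intro i hi
        rw [Finset.mem_Iio, Fin.lt_def] at hi
        rw [hss i hi]
      have hD' : ∀ s : S, ∑ a, πb s g a *
          (Real.log (π s g a) - Real.log (πb s g a) + KL g s) = 0 := by
        intro s
        have hgoal : ∀ a, πb s g a * (Real.log (π s g a) - Real.log (πb s g a) + KL g s)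
            = πb s g a * KL g s - πb s g a * Real.log (πb s g a / π s g a) := by
          intro a
          rw [Real.log_div (hπb0 _ _ _).ne' (hπ0 _ _ _).ne']
          ring
        rw [Finset.sum_congr rfl (fun a _ => hgoal a), Finset.sum_sub_distrib,
          ← Finset.sum_mul, hπb1 s g, one_mul]
        rw [hKLdef]
        ring
      exact tower T hT ρ P hP1 πb hπb1 g t ht1 (uu g t) hu'
        (fun s a => Real.log (π s g a) - Real.log (πb s g a) + KL g s) hD'
  -- the pointwise bound
  have c6 : ∀ (g : G) (t : Fin T),
      ∑ τ : (Fin T → S) × (Fin T → A), (-(T : ℝ)) * (Pb g τ * KL g (τ.1 t))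
      ≤ ∑ τ : (Fin T → S) × (Fin T → A), Pb g τ * (uu g t τ.1 * (-(KL g (τ.1 t)))) := by
    intro g t
    apply Finset.sum_le_sum
    intro τ _
    have h1 := hPb0 g τ
    have h2 := hKL0 g (τ.1 t)
    have h3 := huu0 g t τ.1
    have h4 := huuT g t τ.1
    have h5 : (Pb g τ * KL g (τ.1 t)) * uu g t τ.1 ≤ (Pb g τ * KL g (τ.1 t)) * (T : ℝ) :=
      mul_le_mul_of_nonneg_left h4 (mul_nonneg h1 h2)
    nlinarith [h5]
  have hS1le0 : ∀ g, S1 g ≤ 0 := by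
    intro g
    rw [hS1def]
    apply Finset.sum_nonpos
    intro τ _
    have hinner : (∑ t : Fin T, Real.log (π (τ.1 t) g (τ.2 t)) * w g t τ.1) ≤ 0 := by
      apply Finset.sum_nonpos
      intro t _
      exact mul_nonpos_of_nonpos_of_nonneg (hlogπ0 _ _ _) (hw0 g t τ.1)
    have := hPb0 g τ
    nlinarith
  have hS20 : ∀ g, 0 ≤ S2 g := by
    intro g
    rw [hS2def]
    apply Finset.sum_nonneg
    intro τ _
    apply mul_nonneg (hPb0 g τ)
    exact Finset.sum_nonneg fun t _ => hKL0 g (τ.1 t)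
  -- core inequality per goal
  have core : ∀ g, S1 g - E g - (T : ℝ) * S2 g
      ≤ ∑ τ : (Fin T → S) × (Fin T → A), Pb g τ * (R τ g * Real.log (L g τ)) := by
    intro g
    have hRsplit : ∀ (t : Fin T) (τ : (Fin T → S) × (Fin T → A)),
        R τ g = uu g t τ.1 + w g t τ.1 := by
      intro t τ
      rw [hRdef, huudef, hwdef]
      unfold RetG
      simp only
      have huniv : (Finset.univ : Finset (Fin T)) = Finset.Iio t ∪ Finset.Ici t := by
        ext i
        simp only [Finset.mem_univ, Finset.mem_union, Finset.mem_Iio, Finset.mem_Ici, true_iff]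
        exact lt_or_ge i t
      rw [huniv, Finset.sum_union (Finset.disjoint_left.mpr (fun i hi hj => by
        rw [Finset.mem_Iio] at hi
        rw [Finset.mem_Ici] at hj
        exact absurd hi (not_lt.mpr hj)))]
    have e1 : ∑ τ : (Fin T → S) × (Fin T → A), Pb g τ * (R τ g * Real.log (L g τ))
        = ∑ t : Fin T, ∑ τ : (Fin T → S) × (Fin T → A),
            Pb g τ * (R τ g * (Real.log (π (τ.1 t) g (τ.2 t)) - Real.log (πb (τ.1 t) g (τ.2 t)))) := by
      rw [Finset.sum_comm]
      apply Finset.sum_congr rfl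
      intro τ _
      rw [hlogL g τ, Finset.mul_sum, Finset.mul_sum]
    rw [e1]
    have per_t : ∀ t : Fin T,
        (∑ τ : (Fin T → S) × (Fin T → A), Pb g τ * (Real.log (π (τ.1 t) g (τ.2 t)) * w g t τ.1))
        - (∑ τ : (Fin T → S) × (Fin T → A), Pb g τ * (Real.log (πb (τ.1 t) g (τ.2 t)) * w g t τ.1))
        + (∑ τ : (Fin T → S) × (Fin T → A), (-(T : ℝ)) * (Pb g τ * KL g (τ.1 t)))
        ≤ ∑ τ : (Fin T → S) × (Fin T → A),
            Pb g τ * (R τ g * (Real.log (π (τ.1 t) g (τ.2 t)) - Real.log (πb (τ.1 t) g (τ.2 t)))) := by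
      intro t
      have edec : ∑ τ : (Fin T → S) × (Fin T → A),
          Pb g τ * (R τ g * (Real.log (π (τ.1 t) g (τ.2 t)) - Real.log (πb (τ.1 t) g (τ.2 t))))
          = (∑ τ : (Fin T → S) × (Fin T → A), Pb g τ * (Real.log (π (τ.1 t) g (τ.2 t)) * w g t τ.1))
            - (∑ τ : (Fin T → S) × (Fin T → A), Pb g τ * (Real.log (πb (τ.1 t) g (τ.2 t)) * w g t τ.1))
            + (∑ τ : (Fin T → S) × (Fin T → A),
                Pb g τ * (uu g t τ.1 * (Real.log (π (τ.1 t) g (τ.2 t)) - Real.log (πb (τ.1 t) g (τ.2 t))))) := by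
        rw [← Finset.sum_sub_distrib, ← Finset.sum_add_distrib]
        apply Finset.sum_congr rfl
        intro τ _
        rw [hRsplit t τ]
        ring
      rw [edec, c5 g t]
      exact add_le_add le_rfl (c6 g t)
    have total := Finset.sum_le_sum (fun t (_ : t ∈ Finset.univ) => per_t t)
    have idS1 : ∑ t : Fin T, ∑ τ : (Fin T → S) × (Fin T → A),
        Pb g τ * (Real.log (π (τ.1 t) g (τ.2 t)) * w g t τ.1) = S1 g := by
      rw [Finset.sum_comm, hS1def]
      apply Finset.sum_congr rfl
      intro τ _
      rw [Finset.mul_sum]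
    have idE : ∑ t : Fin T, ∑ τ : (Fin T → S) × (Fin T → A),
        Pb g τ * (Real.log (πb (τ.1 t) g (τ.2 t)) * w g t τ.1) = E g := by
      rw [Finset.sum_comm, hEdef]
      apply Finset.sum_congr rfl
      intro τ _
      rw [Finset.mul_sum]
    have idS2 : ∑ t : Fin T, ∑ τ : (Fin T → S) × (Fin T → A),
        (-(T : ℝ)) * (Pb g τ * KL g (τ.1 t)) = -((T : ℝ) * S2 g) := by
      rw [Finset.sum_comm, hS2def]
      rw [Finset.mul_sum, ← Finset.sum_neg_distrib]
      apply Finset.sum_congr rfl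
      intro τ _
      rw [Finset.mul_sum, Finset.mul_sum, ← Finset.sum_neg_distrib]
      apply Finset.sum_congr rfl
      intro t _
      ring
    rw [Finset.sum_add_distrib, Finset.sum_sub_distrib, idS1, idE, idS2] at total
    linarith [total]
  -- per-g master inequality
  have master : ∀ g, Real.log (C g) - E g / C g + S1 g / Cm - (T : ℝ) * S2 g / Cm
      ≤ Real.log (X g) := by
    intro g
    have hCg := hC' g
    have jen := sum_log_le_log_sum (fun τ : (Fin T → S) × (Fin T → A) => Pb g τ * R τ g / C g)
      (fun τ => L g τ)
      (fun τ => div_nonneg (mul_nonneg (hPb0 g τ) (hR0 τ g)) hCg.le)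
      (by rw [← Finset.sum_div, hCdef, div_self hCg.ne'])
      (fun τ => hL0 g τ)
    have e2 : ∑ τ : (Fin T → S) × (Fin T → A), (Pb g τ * R τ g / C g) * L g τ = X g / C g := by
      rw [hXdef]
      simp only
      rw [Finset.sum_div]
      apply Finset.sum_congr rfl
      intro τ _
      rw [hPp g τ]
      ring
    have e3 : ∑ τ : (Fin T → S) × (Fin T → A), (Pb g τ * R τ g / C g) * Real.log (L g τ)
        = (∑ τ : (Fin T → S) × (Fin T → A), Pb g τ * (R τ g * Real.log (L g τ))) / C g := by
      rw [Finset.sum_div]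
      apply Finset.sum_congr rfl
      intro τ _
      ring
    rw [e2, e3, Real.log_div (hX0 g).ne' hCg.ne'] at jen
    have hcore := (div_le_div_iff_of_pos_right hCg).mpr (core g)
    have hsplitdiv : (S1 g - E g - (T : ℝ) * S2 g) / C g
        = S1 g / C g - E g / C g - (T : ℝ) * S2 g / C g := by ring
    rw [hsplitdiv] at hcore
    have m1 : S1 g / Cm ≤ S1 g / C g :=
      div_mono_nonpos (hS1le0 g) hCm0 (hCmle g)
    have m2 : (-((T : ℝ) * S2 g)) / Cm ≤ (-((T : ℝ) * S2 g)) / C g := by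
      apply div_mono_nonpos _ hCm0 (hCmle g)
      have := hS20 g
      have : (0 : ℝ) ≤ (T : ℝ) * S2 g := by positivity
      linarith
    have n1 : (-((T : ℝ) * S2 g)) / Cm = -((T : ℝ) * S2 g / Cm) := by ring
    have n2 : (-((T : ℝ) * S2 g)) / C g = -((T : ℝ) * S2 g / C g) := by ring
    rw [n1, n2] at m2
    linarith [jen, hcore, m1, m2]
  -- outer Jensen
  have outer : ∑ g, p g * Real.log (X g) ≤ Real.log (Jobj T hT φ γ p ρ P π) := by
    rw [hJobj]
    exact sum_log_le_log_sum p X (fun g => (hp0 g).le) hp1 hX0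
  rw [ge_iff_le, hJs, hKs]
  have expand : ∑ g, p g * (Real.log (C g) - E g / C g + S1 g / Cm - (T : ℝ) * S2 g / Cm)
      = (∑ g, p g * (Real.log (C g) - E g / C g)) + (1 / Cm) * (∑ g, p g * S1 g)
        - ((T : ℝ) / Cm) * (∑ g, p g * S2 g) := by
    rw [Finset.mul_sum, Finset.mul_sum, ← Finset.sum_add_distrib, ← Finset.sum_sub_distrib]
    apply Finset.sum_congr rfl
    intro g _
    ring
  have hcoef : (T : ℝ) / Cm * (1 / (T : ℝ) * ∑ g, p g * S1 g)
      = (1 / Cm) * (∑ g, p g * S1 g) := by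
    field_simp
  calc (T : ℝ) / Cm * (1 / (T : ℝ) * ∑ g, p g * S1 g)
        - (T : ℝ) / Cm * (∑ g, p g * S2 g)
        + ∑ g, p g * (Real.log (C g) - E g / C g)
      = ∑ g, p g * (Real.log (C g) - E g / C g + S1 g / Cm - (T : ℝ) * S2 g / Cm) := by
        rw [expand, hcoef]
        ring
    _ ≤ ∑ g, p g * Real.log (X g) := by
        apply Finset.sum_le_sum
        intro g _
        exact mul_le_mul_of_nonneg_left (master g) (hp0 g).le
    _ ≤ Real.log (Jobj T hT φ γ p ρ P π) := outer
end
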